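/- arXiv:1408.2135 — 7 statements merged into one kernel-verified Lean document; each statement's English description precedes it below -/
import Mathlib

section
/- For any convex body K in ℝ^n (compact convex set with nonempty interior), the volume of the difference body K - K = {x - y : x, y ∈ K} is at most binomial(2n, n) times the volume of K. -/
/-!
Put `D = K - K` and `f x = max 0 (1 - gauge D x)`. If `x ∈ s • D`, say `x = s • (a - b)` with
`a, b ∈ K`, then the homothetic copy `s • a + (1 - s) • K` of `K` lies in `K ∩ (x + K)`; hence
`f x ^ n * vol K ≤ vol (K ∩ (x + K))`. Integrating in `x`, the right side gives `vol K ^ 2` by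
Fubini, while the layer-cake formula (the superlevel sets of `f` are homothets of `D`) and a Beta
integral give `∫ f ^ n = vol D / (2n choose n)`.
-/

open MeasureTheory Set Filter Module
open scoped ENNReal Pointwise Topology Nat

theorem integral_mul_pow_sub_one {m : ℕ} (hm : 0 < m) (a : ℝ) :
    ∫ t in (0 : ℝ)..a, m * t ^ (m - 1) = a ^ m := by
  obtain ⟨k, rfl⟩ := Nat.exists_eq_add_of_lt hm
  simp only [zero_add, Nat.add_sub_cancel, intervalIntegral.integral_const_mul, integral_pow]
  push_cast
  field_simp
  ring

theorem integral_pow_mul_one_sub_pow (a b : ℕ) :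
    ∫ x in (0 : ℝ)..1, x ^ a * (1 - x) ^ b = a ! * b ! / (a + b + 1)! := by
  have h : ((∫ x in (0 : ℝ)..1, x ^ a * (1 - x) ^ b : ℝ) : ℂ) =
      Complex.betaIntegral (a + 1) (b + 1) := by
    rw [Complex.betaIntegral, ← intervalIntegral.integral_ofReal]
    refine intervalIntegral.integral_congr fun x _ ↦ ?_
    simp only [add_sub_cancel_right, Complex.cpow_natCast]
    push_cast
    rfl
  rw [Complex.betaIntegral_eq_Gamma_mul_div _ _ (by simp; positivity) (by simp; positivity),
    show (a + 1 + (b + 1) : ℂ) = ((a + b + 1 : ℕ) : ℂ) + 1 by push_cast; ring,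
    Complex.Gamma_nat_eq_factorial, Complex.Gamma_nat_eq_factorial,
    Complex.Gamma_nat_eq_factorial] at h
  exact Complex.ofReal_injective (by push_cast; exact h)

theorem integral_mul_pow_mul_one_sub_pow {m : ℕ} (hm : 0 < m) (d : ℕ) :
    ∫ t in (0 : ℝ)..1, m * t ^ (m - 1) * (1 - t) ^ d = ((m + d).choose m : ℝ)⁻¹ := by
  obtain ⟨k, rfl⟩ := Nat.exists_eq_add_of_lt hm
  simp only [zero_add, Nat.add_sub_cancel, mul_assoc, intervalIntegral.integral_const_mul,
    integral_pow_mul_one_sub_pow, Nat.cast_add_choose, inv_div]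
  rw [Nat.add_right_comm k 1 d]
  push_cast [Nat.factorial_succ]
  field_simp

theorem lintegral_measure_inter_vadd {G : Type*} [AddCommGroup G] [MeasurableSpace G]
    [MeasurableAdd₂ G] [MeasurableNeg G] (μ : Measure G) [SFinite μ] [μ.IsAddLeftInvariant]
    [μ.IsNegInvariant] {A B : Set G} (hA : MeasurableSet A) (hB : MeasurableSet B) :
    ∫⁻ x, μ (A ∩ (x +ᵥ B)) ∂μ = μ A * μ B := by
  have hAi : Measurable (A.indicator (1 : G → ℝ≥0∞)) := measurable_one.indicator hA
  have hBi : Measurable (B.indicator (1 : G → ℝ≥0∞)) := measurable_one.indicator hB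
  calc ∫⁻ x, μ (A ∩ (x +ᵥ B)) ∂μ
      = ∫⁻ x, ∫⁻ y, A.indicator 1 y * B.indicator 1 (y - x) ∂μ ∂μ := by
        refine lintegral_congr fun x ↦ ?_
        rw [← lintegral_indicator_one (hA.inter (hB.const_vadd x))]
        refine lintegral_congr fun y ↦ ?_
        have hmem : y ∈ x +ᵥ B ↔ y - x ∈ B := by
          rw [mem_vadd_set_iff_neg_vadd_mem, vadd_eq_add, neg_add_eq_sub]
        rw [inter_indicator_one, Pi.mul_apply]
        congr 1
        by_cases h : y - x ∈ B
        · simp only [indicator_of_mem h, indicator_of_mem (hmem.2 h), Pi.one_apply]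
        · simp only [indicator_of_notMem h, indicator_of_notMem (mt hmem.1 h)]
    _ = ∫⁻ y, ∫⁻ x, A.indicator 1 y * B.indicator 1 (y - x) ∂μ ∂μ :=
        lintegral_lintegral_swap ((hAi.comp measurable_snd).mul
          (hBi.comp (measurable_snd.sub measurable_fst))).aemeasurable
    _ = ∫⁻ y, A.indicator 1 y * μ B ∂μ := by
        refine lintegral_congr fun y ↦ ?_
        have hBy : Measurable fun x ↦ B.indicator (1 : G → ℝ≥0∞) (y - x) :=
          hBi.comp (measurable_const_sub y)
        rw [lintegral_const_mul _ hBy,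
          lintegral_sub_left_eq_self, lintegral_indicator_one hB]
    _ = μ A * μ B := by rw [lintegral_mul_const _ hAi, lintegral_indicator_one hA]

section AddHaar

variable {E : Type*} [NormedAddCommGroup E] [NormedSpace ℝ E] [FiniteDimensional ℝ E]
  [MeasurableSpace E] [BorelSpace E] (μ : Measure E) [μ.IsAddHaarMeasure]

theorem Convex.addHaar_interior {s : Set E} (hs : Convex ℝ s) : μ (interior s) = μ s := by
  refine le_antisymm (measure_mono interior_subset) ?_
  calc μ s ≤ μ (interior s ∪ frontier s) :=
        measure_mono fun x hx ↦ (em (x ∈ interior s)).imp_right fun h ↦ ⟨subset_closure hx, h⟩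
    _ ≤ μ (interior s) := by
        grw [measure_union_le, hs.addHaar_frontier μ, add_zero]

theorem addHaar_setOf_gauge_lt {s : Set E} (hs : Convex ℝ s) (hs₀ : s ∈ 𝓝 0) {r : ℝ}
    (hr : 0 < r) : μ {x | gauge s x < r} = ENNReal.ofReal (r ^ finrank ℝ E) * μ s := by
  have : {x | gauge s x < r} = r • interior s := by
    ext x
    rw [mem_smul_set_iff_inv_smul_mem₀ hr.ne', ← gauge_lt_one_iff_mem_interior hs hs₀,
      gauge_smul_of_nonneg (inv_nonneg.2 hr.le), smul_eq_mul, inv_mul_lt_one₀ hr, mem_ofPred_eq]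
  rw [this, Measure.addHaar_smul_of_nonneg μ hr.le, hs.addHaar_interior μ]

theorem lintegral_one_sub_gauge_pow {s : Set E} (hs : Convex ℝ s) (hs₀ : s ∈ 𝓝 0) {m : ℕ}
    (hm : 0 < m) :
    ∫⁻ x, ENNReal.ofReal (max 0 (1 - gauge s x) ^ m) ∂μ =
      ((m + finrank ℝ E).choose m : ℝ≥0∞)⁻¹ * μ s := by
  set d := finrank ℝ E
  have hg : Continuous fun t : ℝ ↦ m * t ^ (m - 1) * (1 - t) ^ d := by fun_prop
  have hlevel {t : ℝ} (ht : 0 < t) :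
      {x | t < max 0 (1 - gauge s x)} = {x | gauge s x < 1 - t} := by
    ext x
    simp only [mem_ofPred_eq, lt_max_iff, ht.not_gt, false_or, lt_sub_comm]
  have layer_cake := lintegral_comp_eq_lintegral_meas_lt_mul μ
    (f := fun x ↦ max 0 (1 - gauge s x)) (g := fun t ↦ m * t ^ (m - 1))
    (.of_forall fun x ↦ le_max_left _ _)
    (continuous_const.max (continuous_const.sub (continuous_gauge hs hs₀))).aemeasurable
    (fun t _ ↦ (continuous_const.mul (continuous_pow (m - 1))).intervalIntegrable 0 t)
    ((ae_restrict_iff' measurableSet_Ioi).2 (.of_forall fun t (ht : 0 < t) ↦ by positivity))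
  simp only [integral_mul_pow_sub_one hm] at layer_cake
  calc ∫⁻ x, ENNReal.ofReal (max 0 (1 - gauge s x) ^ m) ∂μ
      = ∫⁻ t in Ioo 0 1, μ s * ENNReal.ofReal (m * t ^ (m - 1) * (1 - t) ^ d) := by
        rw [layer_cake, ← Ioo_union_Ici_eq_Ioi zero_lt_one,
          lintegral_union measurableSet_Ici (disjoint_left.2 fun t ht ht' ↦ ht.2.not_ge ht'),
          setLIntegral_eq_zero measurableSet_Ici (fun t (ht : 1 ≤ t) ↦ ?_), add_zero]
        · refine setLIntegral_congr_fun measurableSet_Ioo fun t ⟨ht₀, ht₁⟩ ↦ ?_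
          rw [hlevel ht₀, addHaar_setOf_gauge_lt μ hs hs₀ (sub_pos.2 ht₁),
            ENNReal.ofReal_mul (show (0 : ℝ) ≤ m * t ^ (m - 1) by positivity)]
          ring
        · have : {x | gauge s x < 1 - t} = ∅ :=
            eq_empty_of_forall_notMem fun x hx ↦ (gauge_nonneg x).not_gt (hx.trans_le (by linarith))
          rw [hlevel (zero_lt_one.trans_le ht), this, measure_empty, zero_mul, Pi.zero_apply]
    _ = μ s * ENNReal.ofReal (∫ t in (0 : ℝ)..1, m * t ^ (m - 1) * (1 - t) ^ d) := by
        rw [lintegral_const_mul _ hg.measurable.ennreal_ofReal, intervalIntegral.integral_of_le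
          zero_le_one, integral_Ioc_eq_integral_Ioo, ofReal_integral_eq_lintegral_ofReal
          (hg.integrableOn_Icc.mono_set Ioo_subset_Icc_self)]
        filter_upwards [ae_restrict_mem measurableSet_Ioo] with t ⟨ht₀, ht₁⟩
        have : 0 ≤ 1 - t := by linarith
        positivity
    _ = ((m + d).choose m : ℝ≥0∞)⁻¹ * μ s := by
        rw [integral_mul_pow_mul_one_sub_pow hm, mul_comm, ENNReal.ofReal_inv_of_pos
          (Nat.cast_pos.2 (Nat.choose_pos (Nat.le_add_right m d))), ENNReal.ofReal_natCast]

theorem ofReal_one_sub_pow_mul_le_addHaar_inter_vadd {K : Set E} (hK : Convex ℝ K) {s : ℝ}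
    (hs₀ : 0 ≤ s) (hs₁ : s ≤ 1) {x : E} (hx : x ∈ s • (K - K)) :
    ENNReal.ofReal ((1 - s) ^ finrank ℝ E) * μ K ≤ μ (K ∩ (x +ᵥ K)) := by
  obtain ⟨_, ⟨a, ha, b, hb, rfl⟩, rfl⟩ := hx
  rw [← Measure.addHaar_smul_of_nonneg μ (sub_nonneg.2 hs₁), ← measure_vadd μ (s • a)]
  refine measure_mono ?_
  rintro _ ⟨_, ⟨k, hk, rfl⟩, rfl⟩
  refine ⟨hK ha hk hs₀ (sub_nonneg.2 hs₁) (add_sub_cancel _ _), ?_⟩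
  refine ⟨s • b + (1 - s) • k, hK hb hk hs₀ (sub_nonneg.2 hs₁) (add_sub_cancel _ _), ?_⟩
  simp only [vadd_eq_add, smul_sub]
  abel

theorem ofReal_one_sub_gauge_pow_mul_le_addHaar_inter_vadd {K : Set E} (hK : Convex ℝ K)
    (hK₀ : K - K ∈ 𝓝 0) (hKμ : μ K ≠ ∞) (hE : 0 < finrank ℝ E) (x : E) :
    ENNReal.ofReal (max 0 (1 - gauge (K - K) x) ^ finrank ℝ E) * μ K ≤ μ (K ∩ (x +ᵥ K)) := by
  set d := finrank ℝ E
  rcases lt_or_ge (gauge (K - K) x) 1 with hx | hx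
  · rw [max_eq_right (sub_nonneg.2 hx.le)]
    have hlim : Tendsto (fun s : ℝ ↦ ENNReal.ofReal ((1 - s) ^ d) * μ K) (𝓝[>] (gauge (K - K) x))
        (𝓝 (ENNReal.ofReal ((1 - gauge (K - K) x) ^ d) * μ K)) :=
      ((ENNReal.continuous_mul_const hKμ).comp (ENNReal.continuous_ofReal.comp
        ((continuous_const.sub continuous_id).pow d))).continuousAt.tendsto.mono_left
        nhdsWithin_le_nhds
    refine le_of_tendsto hlim ?_
    filter_upwards [Ioo_mem_nhdsGT hx] with s ⟨hxs, hs₁⟩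
    obtain ⟨b, hb₀, hbs, hxb⟩ := exists_lt_of_gauge_lt (absorbent_nhds_zero hK₀) hxs
    calc ENNReal.ofReal ((1 - s) ^ d) * μ K ≤ ENNReal.ofReal ((1 - b) ^ d) * μ K := by
          gcongr
      _ ≤ μ (K ∩ (x +ᵥ K)) :=
          ofReal_one_sub_pow_mul_le_addHaar_inter_vadd μ hK hb₀.le (hbs.trans hs₁).le hxb
  · rw [max_eq_left (sub_nonpos.2 hx), zero_pow hE.ne', ENNReal.ofReal_zero, zero_mul]
    exact zero_le

end AddHaar

theorem rogers_shephard_difference_body (n : ℕ) (K : Set (EuclideanSpace ℝ (Fin n)))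
    (hK : Convex ℝ K) (hKc : IsCompact K) (hKi : (interior K).Nonempty) :
    volume (K - K) ≤ (Nat.choose (2 * n) n : ℝ≥0∞) * volume K := by
  rcases n.eq_zero_or_pos with rfl | hn
  · obtain ⟨k, hk⟩ := hKi.mono interior_subset
    calc volume (K - K) ≤ volume K := measure_mono fun x _ ↦ Subsingleton.elim k x ▸ hk
      _ = _ := by simp
  have hKm := hKc.measurableSet
  have hKpos : 0 < volume K := Measure.measure_pos_of_nonempty_interior _ hKi
  have hK₀ : K - K ∈ 𝓝 0 := Measure.sub_mem_nhds_zero_of_addHaar_pos volume K hKm hKpos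
  have hD : Convex ℝ (K - K) := hK.sub hK
  have hd : finrank ℝ (EuclideanSpace ℝ (Fin n)) = n := finrank_euclideanSpace_fin
  have key : ((2 * n).choose n : ℝ≥0∞)⁻¹ * volume (K - K) * volume K ≤ volume K * volume K :=
    calc _ = ∫⁻ x, ENNReal.ofReal (max 0 (1 - gauge (K - K) x) ^ n) * volume K := by
          rw [lintegral_mul_const _ (by fun_prop (disch := assumption)),
            lintegral_one_sub_gauge_pow volume hD hK₀ hn, hd, two_mul]
      _ ≤ ∫⁻ x, volume (K ∩ (x +ᵥ K)) := lintegral_mono fun x ↦ by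
          simpa only [hd] using ofReal_one_sub_gauge_pow_mul_le_addHaar_inter_vadd volume hK hK₀
            hKc.measure_lt_top.ne (by rwa [hd]) x
      _ = volume K * volume K := lintegral_measure_inter_vadd volume hKm hKm
  rwa [ENNReal.mul_le_mul_iff_left hKpos.ne' hKc.measure_lt_top.ne,
    ENNReal.inv_mul_le_iff (Nat.cast_ne_zero.2 (Nat.choose_pos (by omega)).ne') (by simp)] at key
end

section
/- If K is a convex body in ℝ^n with center of mass at the origin, then -K ⊆ n·K. -/
/-
Fix a linear functional `f`, a point `p ∈ K` with `a = f p < 0`, and let `c = max_K f`. Slicing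
`K` by the level sets of `f`, convexity compares every slice with the slice `K₀` at level `0`
through homotheties centred at `p`: the slice at level `t ∈ [a, 0]` contains the copy of `K₀`
scaled by `(t - a) / (-a)`, and the slice at level `t ≥ 0` is contained in it. Weighted by `t`,
both comparisons bound `t · vol(Kₜ)` by the same quantity for the cone with apex `p` over `K₀`.
Since the centroid is `0`, the interior of `K` meets both sides of `{f = 0}`, so `K₀` has
positive volume, and integrating over `t` gives
`0 ≤ ∫ₐᶜ t (t - a)^(n-1) dt = (c - a)ⁿ (n c + a) / (n (n + 1))`, that is `-a ≤ n c`.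
A separating functional turns this into `-K ⊆ n • K`.
-/

open MeasureTheory Set Module
open scoped Pointwise

theorem Convex.subset_closure_interior {E : Type*} [AddCommGroup E] [Module ℝ E]
    [TopologicalSpace E] [IsTopologicalAddGroup E] [ContinuousSMul ℝ E] {K : Set E}
    (hK : Convex ℝ K) (hKi : (interior K).Nonempty) : K ⊆ closure (interior K) := by
  rw [hK.closure_interior_eq_closure_of_nonempty_interior hKi]
  exact subset_closure

theorem Convex.exists_mem_interior_eq_zero_of_setIntegral_eq_zero {E : Type*}
    [NormedAddCommGroup E] [NormedSpace ℝ E] [MeasurableSpace E] [OpensMeasurableSpace E]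
    {μ : Measure E} [μ.IsOpenPosMeasure] [IsFiniteMeasureOnCompacts μ] {K : Set E}
    (hK : Convex ℝ K) (hKc : IsCompact K) (hKi : (interior K).Nonempty) {f : E → ℝ}
    (hf : Continuous f) (hfK : ∫ z in K, f z ∂μ = 0) {p : E} (hp : p ∈ K) (hfp : f p < 0) :
    ∃ w ∈ interior K, f w = 0 := by
  have hneg : IsOpen {z | f z < 0} := isOpen_lt hf continuous_const
  obtain ⟨w₁, hw₁, hw₁K⟩ := mem_closure_iff.1 (hK.subset_closure_interior hKi hp) _ hneg hfp
  obtain ⟨w₂, hw₂K, hw₂⟩ : ∃ w ∈ interior K, 0 < f w := by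
    by_contra! h
    have hle : ∀ z ∈ K, f z ≤ 0 := fun z hz =>
      closure_minimal h (isClosed_le hf continuous_const) (hK.subset_closure_interior hKi hz)
    have hpos : 0 < ∫ z in K, -f z ∂μ := by
      refine (setIntegral_pos_iff_support_of_nonneg_ae ?_ ?_).2 ?_
      · exact (ae_restrict_iff' hKc.measurableSet).2
          (.of_forall fun z hz => by simpa using hle z hz)
      · exact (hf.continuousOn.integrableOn_compact hKc).neg
      · refine ((isOpen_interior.inter hneg).measure_pos μ ⟨w₁, hw₁K, hw₁⟩).trans_le
          (measure_mono ?_)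
        rintro z ⟨hzK, hz⟩
        exact ⟨by simpa using hz.ne, interior_subset hzK⟩
    rw [integral_neg, hfK, neg_zero] at hpos
    exact hpos.false
  obtain ⟨w, hw, hw₀⟩ := hK.interior.isPreconnected.intermediate_value hw₁K hw₂K hf.continuousOn
    ⟨hw₁.le, hw₂.le⟩
  exact ⟨w, hw, hw₀⟩

section Slices

theorem IsCompact.measure_slice_lt_top {F : Type*} [TopologicalSpace F] [MeasurableSpace F]
    {K : Set (ℝ × F)} (hKc : IsCompact K) (ν : Measure F) [IsFiniteMeasureOnCompacts ν]
    (t : ℝ) : ν (Prod.mk t ⁻¹' K) < ⊤ :=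
  (measure_mono fun y (hy : (t, y) ∈ K) => mem_image_of_mem Prod.snd hy).trans_lt
    (hKc.image continuous_snd).measure_lt_top

theorem integral_indicator_fst_prodMk {F : Type*} [MeasurableSpace F] (ν : Measure F)
    {K : Set (ℝ × F)} (hK : MeasurableSet K) (t : ℝ) :
    ∫ y, K.indicator Prod.fst (t, y) ∂ν = t * ν.real (Prod.mk t ⁻¹' K) := by
  rw [mul_comm, ← smul_eq_mul, ← integral_indicator_const t (measurable_prodMk_left hK)]
  rfl

theorem integrable_mul_measureReal_slice {F : Type*} [MeasurableSpace F] (μ : Measure ℝ)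
    (ν : Measure F) [SFinite ν] {K : Set (ℝ × F)} (hK : MeasurableSet K)
    (hint : IntegrableOn Prod.fst K (μ.prod ν)) :
    Integrable (fun t => t * ν.real (Prod.mk t ⁻¹' K)) μ :=
  (hint.integrable_indicator hK).integral_prod_left.congr
    (.of_forall (integral_indicator_fst_prodMk ν hK))

theorem setIntegral_fst_eq_integral_mul_measureReal_slice {F : Type*} [MeasurableSpace F]
    (μ : Measure ℝ) (ν : Measure F) [SFinite μ] [SFinite ν] {K : Set (ℝ × F)}
    (hK : MeasurableSet K) (hint : IntegrableOn Prod.fst K (μ.prod ν)) :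
    ∫ z in K, z.1 ∂(μ.prod ν) = ∫ t, t * ν.real (Prod.mk t ⁻¹' K) ∂μ := by
  rw [← integral_indicator hK, integral_prod _ (hint.integrable_indicator hK)]
  simp_rw [integral_indicator_fst_prodMk ν hK]

variable {F : Type*} [NormedAddCommGroup F] [NormedSpace ℝ F]

theorem Convex.homothety_image_slice_subset {K : Set (ℝ × F)} (hK : Convex ℝ K) {p : ℝ × F}
    (hp : p ∈ K) {r : ℝ} (hr₀ : 0 ≤ r) (hr₁ : r ≤ 1) (s : ℝ) :
    AffineMap.homothety p.2 r '' (Prod.mk s ⁻¹' K) ⊆ Prod.mk (p.1 + r * (s - p.1)) ⁻¹' K := by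
  rintro _ ⟨y, hy, rfl⟩
  rw [mem_preimage]
  convert hK hp hy (sub_nonneg.2 hr₁) hr₀ (sub_add_cancel 1 r) using 1
  ext
  · simp only [Prod.fst_add, Prod.smul_fst, smul_eq_mul]
    ring
  · simp only [AffineMap.homothety_apply, vsub_eq_sub, vadd_eq_add, Prod.snd_add, Prod.smul_snd,
      sub_smul, one_smul, smul_sub, Prod.snd_sub]
    abel

variable [MeasurableSpace F] [BorelSpace F] [FiniteDimensional ℝ F]

theorem Convex.pow_mul_measureReal_slice_le {K : Set (ℝ × F)} (hK : Convex ℝ K)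
    (hKc : IsCompact K) (ν : Measure F) [ν.IsAddHaarMeasure] {p : ℝ × F} (hp : p ∈ K) {r : ℝ}
    (hr₀ : 0 ≤ r) (hr₁ : r ≤ 1) (s : ℝ) :
    r ^ finrank ℝ F * ν.real (Prod.mk s ⁻¹' K) ≤
      ν.real (Prod.mk (p.1 + r * (s - p.1)) ⁻¹' K) := by
  have := measure_mono (μ := ν) (hK.homothety_image_slice_subset hp hr₀ hr₁ s)
  rw [Measure.addHaar_image_homothety, abs_of_nonneg (pow_nonneg hr₀ _)] at this
  have := ENNReal.toReal_mono (hKc.measure_slice_lt_top ν _).ne this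
  rwa [ENNReal.toReal_mul, ENNReal.toReal_ofReal (pow_nonneg hr₀ _)] at this

/-- `ν.real (Prod.mk 0 ⁻¹' K) * ((t - p.1) / -p.1) ^ finrank ℝ F` is the volume of the slice at
level `t` of the cone with apex `p` over the slice of `K` at level `0`. -/
theorem Convex.pow_mul_measureReal_slice_le_indicator {K : Set (ℝ × F)} (hK : Convex ℝ K)
    (hKc : IsCompact K) (ν : Measure F) [ν.IsAddHaarMeasure] {p : ℝ × F} (hp : p ∈ K)
    (hp₀ : p.1 < 0) {c : ℝ} (hc : ∀ z ∈ K, z.1 ≤ c) (t : ℝ) :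
    (-p.1) ^ finrank ℝ F * (t * ν.real (Prod.mk t ⁻¹' K)) ≤
      ν.real (Prod.mk 0 ⁻¹' K) *
        (Icc p.1 c).indicator (fun t => t * (t - p.1) ^ finrank ℝ F) t := by
  obtain ⟨a, q⟩ := p
  dsimp only at hp₀ ⊢
  have ha : 0 < -a := neg_pos.2 hp₀
  by_cases ht : t ∈ Icc a c
  swap
  · rw [indicator_of_notMem ht, mul_zero]
    rcases not_and_or.1 ht with hta | htc
    · have : t * ν.real (Prod.mk t ⁻¹' K) ≤ 0 :=
        mul_nonpos_of_nonpos_of_nonneg (by linarith [not_le.1 hta]) measureReal_nonneg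
      exact mul_nonpos_of_nonneg_of_nonpos (by positivity) this
    · have : Prod.mk t ⁻¹' K = ∅ := eq_empty_of_forall_notMem fun y hy => htc (hc _ hy)
      simp [this]
  rw [indicator_of_mem ht]
  rcases le_total t 0 with ht₀ | ht₀
  · have hcmp := hK.pow_mul_measureReal_slice_le hKc ν hp (r := (t - a) / -a)
      (div_nonneg (by linarith [ht.1]) ha.le) ((div_le_one ha).2 (by linarith)) 0
    have hlevel : a + (t - a) / -a * (0 - a) = t := by
      rw [zero_sub, div_mul_cancel₀ _ ha.ne']
      ring
    dsimp only at hcmp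
    rw [hlevel, div_pow, div_mul_eq_mul_div, div_le_iff₀ (pow_pos ha _)] at hcmp
    nlinarith
  · have hcmp := hK.pow_mul_measureReal_slice_le hKc ν hp (r := -a / (t - a))
      (div_nonneg ha.le (by linarith)) ((div_le_one (by linarith)).2 (by linarith)) t
    have hlevel : a + -a / (t - a) * (t - a) = 0 := by
      rw [div_mul_cancel₀ _ (by linarith)]
      ring
    dsimp only at hcmp
    rw [hlevel, div_pow, div_mul_eq_mul_div, div_le_iff₀ (pow_pos (by linarith) _)] at hcmp
    nlinarith

end Slices

theorem intervalIntegral.integral_mul_sub_pow (a c : ℝ) (m : ℕ) :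
    ∫ t in a..c, t * (t - a) ^ m =
      (c - a) ^ (m + 1) * ((m + 1) * c + a) / ((m + 1) * (m + 2)) := by
  have hsub := intervalIntegral.integral_comp_sub_right (fun x => x ^ (m + 1) + a * x ^ m) a
    (a := a) (b := c)
  rw [sub_self] at hsub
  rw [intervalIntegral.integral_congr (g := fun x => (x - a) ^ (m + 1) + a * (x - a) ^ m)
      fun t _ => by ring, hsub,
    intervalIntegral.integral_add (intervalIntegral.intervalIntegrable_pow _)
      ((intervalIntegral.intervalIntegrable_pow _).const_mul _),
    integral_pow, intervalIntegral.integral_const_mul, integral_pow]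
  push_cast
  field_simp
  ring

theorem Convex.neg_fst_le_of_setIntegral_fst_eq_zero {F : Type*} [NormedAddCommGroup F]
    [NormedSpace ℝ F] [MeasurableSpace F] [BorelSpace F] [FiniteDimensional ℝ F]
    {K : Set (ℝ × F)} (hK : Convex ℝ K) (hKc : IsCompact K) (hKi : (interior K).Nonempty)
    (ν : Measure F) [ν.IsAddHaarMeasure] (hcent : ∫ z in K, z.1 ∂(volume.prod ν) = 0) {c : ℝ}
    (hc : ∀ z ∈ K, z.1 ≤ c) {p : ℝ × F} (hp : p ∈ K) : -p.1 ≤ (finrank ℝ F + 1) * c := by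
  set m := finrank ℝ F
  rcases le_or_gt 0 p.1 with hp₀ | hp₀
  · nlinarith [hc p hp]
  have hint : IntegrableOn Prod.fst K (volume.prod ν) :=
    continuous_fst.continuousOn.integrableOn_compact hKc
  obtain ⟨w, hwK, hw₀⟩ := hK.exists_mem_interior_eq_zero_of_setIntegral_eq_zero hKc hKi
    continuous_fst hcent hp hp₀
  have hc₀ : 0 ≤ c := hw₀ ▸ hc w (interior_subset hwK)
  have hg₀ : 0 < ν.real (Prod.mk 0 ⁻¹' K) := by
    have := (isOpen_interior.preimage (Continuous.prodMk_right w.1)).measure_pos ν ⟨w.2, hwK⟩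
    rw [hw₀] at this
    exact ENNReal.toReal_pos (this.trans_le (measure_mono (preimage_mono interior_subset))).ne'
      (hKc.measure_slice_lt_top ν 0).ne
  have hcone : 0 ≤ ∫ t in p.1..c, t * (t - p.1) ^ m := by
    have := integral_mono
      ((integrable_mul_measureReal_slice volume ν hKc.measurableSet hint).const_mul _)
      (((continuous_id.mul ((continuous_id.sub continuous_const).pow m)).integrableOn_Icc
        |>.integrable_indicator measurableSet_Icc).const_mul _)
      (hK.pow_mul_measureReal_slice_le_indicator hKc ν hp hp₀ hc)
    rw [integral_const_mul, integral_const_mul,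
      ← setIntegral_fst_eq_integral_mul_measureReal_slice volume ν hKc.measurableSet hint, hcent,
      mul_zero, integral_indicator measurableSet_Icc, integral_Icc_eq_integral_Ioc,
      ← intervalIntegral.integral_of_le (by linarith)] at this
    exact nonneg_of_mul_nonneg_right this hg₀
  rw [intervalIntegral.integral_mul_sub_pow, le_div_iff₀ (by positivity), zero_mul] at hcone
  linarith [nonneg_of_mul_nonneg_right hcone (pow_pos (by linarith : 0 < c - p.1) (m + 1))]

variable {E : Type*} [NormedAddCommGroup E] [NormedSpace ℝ E] [FiniteDimensional ℝ E]

theorem ContinuousLinearMap.exists_equiv_prod_ker {f : E →L[ℝ] ℝ} (hf : f ≠ 0) :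
    ∃ L : E ≃L[ℝ] ℝ × f.ker, ∀ z, (L z).1 = f z := by
  obtain ⟨q, hq⟩ := f.ker.exists_isCompl
  refine ⟨(LinearMap.equivProdOfSurjectiveOfIsCompl (f : E →ₗ[ℝ] ℝ) (f.ker.projectionOnto q hq)
    ?_ (Submodule.range_projectionOnto hq)
    (by rwa [Submodule.ker_projectionOnto])).toContinuousLinearEquiv, fun z => rfl⟩
  exact Module.Dual.range_eq_top_of_ne_zero (f := (f : E →ₗ[ℝ] ℝ))
    (ContinuousLinearMap.coe_injective.ne hf)

variable [MeasurableSpace E] [BorelSpace E]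

theorem Convex.neg_le_finrank_mul_of_setIntegral_eq_zero {K : Set E} (hK : Convex ℝ K)
    (hKc : IsCompact K) (hKi : (interior K).Nonempty) (μ : Measure E) [μ.IsAddHaarMeasure]
    {f : E →L[ℝ] ℝ} (hf : ∫ z in K, f z ∂μ = 0) {c : ℝ} (hc : ∀ z ∈ K, f z ≤ c) {p : E}
    (hp : p ∈ K) : -f p ≤ finrank ℝ E * c := by
  rcases eq_or_ne f 0 with rfl | hf₀
  · simpa using mul_nonneg (Nat.cast_nonneg _) (hc p hp)
  obtain ⟨L, hL⟩ := f.exists_equiv_prod_ker hf₀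
  set ν : Measure f.ker := Measure.addHaar
  have := L.isAddHaarMeasure_map μ
  have hμ : μ.map L = (μ.map L).addHaarScalarFactor (volume.prod ν) • volume.prod ν :=
    Measure.isAddLeftInvariant_eq_smul _ _
  have hcent : ∫ z in L '' K, z.1 ∂(volume.prod ν) = 0 := by
    have hLK : ∫ z in L '' K, z.1 ∂(μ.map L) = ∫ x in L ⁻¹' (L '' K), (L x).1 ∂μ :=
      L.toHomeomorph.measurableEmbedding.setIntegral_map _ _
    simp_rw [L.injective.preimage_image, hL] at hLK
    rw [hf, hμ, Measure.restrict_smul, integral_smul_nnreal_measure, smul_eq_zero] at hLK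
    exact hLK.resolve_left (Measure.addHaarScalarFactor_pos_of_isAddHaarMeasure _ _).ne'
  have hKi' : (interior (L '' K)).Nonempty := by
    rw [← L.coe_toHomeomorph, ← Homeomorph.image_interior]
    exact hKi.image _
  have hc' : ∀ z ∈ L '' K, z.1 ≤ c := by
    rintro _ ⟨z, hz, rfl⟩
    exact (hL z).symm ▸ hc z hz
  have := (hK.linear_image (L : E →ₗ[ℝ] ℝ × f.ker)).neg_fst_le_of_setIntegral_fst_eq_zero
    (hKc.image L.continuous) hKi' ν hcent hc' (mem_image_of_mem L hp)
  rwa [hL, ← Nat.cast_add_one, Module.Dual.finrank_ker_add_one_of_ne_zero] at this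
  exact ContinuousLinearMap.coe_injective.ne hf₀

theorem neg_subset_dilate_of_centroid_zero (n : ℕ) (K : Set (EuclideanSpace ℝ (Fin n)))
    (hK : Convex ℝ K) (hKc : IsCompact K) (hKi : (interior K).Nonempty)
    (hcent : ∫ x in K, x ∂volume = 0) :
    -K ⊆ (n : ℝ) • K := by
  intro x hx
  rcases n.eq_zero_or_pos with rfl | hn
  · rw [Nat.cast_zero, zero_smul_set (hKi.mono interior_subset)]
    exact Subsingleton.elim _ _
  by_contra hxK
  have hx' : (n : ℝ)⁻¹ • x ∉ K := fun h => hxK ⟨_, h, smul_inv_smul₀ (by positivity) x⟩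
  obtain ⟨f, u, hfK, hfx⟩ := geometric_hahn_banach_closed_point hK hKc.isClosed hx'
  have hf : ∫ z in K, f z = 0 := by
    rw [f.integral_comp_comm (continuousOn_id.integrableOn_compact (f := fun z => z) hKc), hcent,
      map_zero]
  have := hK.neg_le_finrank_mul_of_setIntegral_eq_zero hKc hKi volume hf
    (fun z hz => (hfK z hz).le) hx
  rw [finrank_euclideanSpace_fin, map_neg, neg_neg] at this
  rw [map_smul, smul_eq_mul, inv_mul_eq_div, lt_div_iff₀ (by positivity)] at hfx
  linarith
end

section
/- For any convex body K in ℝ^n containing 0, the volume of the convex hull of K and -K is at most 2^n times the volume of K. -/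
/-!
A Rogers–Shephard double counting. Write `‖·‖_K` for the gauge of `K`, `D = conv (K ∪ -K)` and
`d` for the dimension. If `‖z‖_D = r < 1` then `z = u - v` with `‖u‖_K + ‖v‖_K ≤ r`, so the slice
`{w | ‖z + w‖_K + ‖w‖_K ≤ 1}` contains a translate of `((1 - r) / 2) • K`. Integrating over `z`,
the slices have total volume at least `2⁻ᵈ ∫ (1 - ‖z‖_D)₊ᵈ dz · vol K`, while integrating first
in `z` gives exactly `∫ (1 - ‖w‖_K)₊ᵈ dw · vol K`. By the layer-cake formula
`∫ (1 - ‖x‖_W)₊ᵈ dx = c_d vol W` for every convex body `W` with the same constant `c_d`, hence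
`vol D ≤ 2ᵈ vol K`.
-/

open MeasureTheory Set Filter Module Metric
open scoped ENNReal Pointwise Topology

theorem IsCompact.convexJoin {E : Type*} [AddCommGroup E] [Module ℝ E] [TopologicalSpace E]
    [IsTopologicalAddGroup E] [ContinuousSMul ℝ E] {s t : Set E} (hs : IsCompact s)
    (ht : IsCompact t) : IsCompact (_root_.convexJoin ℝ s t) := by
  have : _root_.convexJoin ℝ s t =
      (fun p : (E × E) × ℝ ↦ (1 - p.2) • p.1.1 + p.2 • p.1.2) '' ((s ×ˢ t) ×ˢ Icc 0 1) := by
    ext x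
    simp only [mem_convexJoin, segment_eq_image, mem_image, mem_prod, Prod.exists]
    grind
  rw [this]
  exact ((hs.prod ht).prod isCompact_Icc).image (by fun_prop)

variable {E : Type*} [NormedAddCommGroup E] [NormedSpace ℝ E]

theorem IsCompact.convexHull_union_neg {K : Set E} (hK : Convex ℝ K) (hKc : IsCompact K)
    (hne : K.Nonempty) : IsCompact (convexHull ℝ (K ∪ -K)) := by
  rw [hK.convexHull_union hK.neg hne hne.neg]
  exact hKc.convexJoin hKc.neg

theorem gauge_le_iff_mem_smul {W : Set E} (hW : Convex ℝ W) (hWc : IsCompact W)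
    (hW0 : W ∈ 𝓝 0) {s : ℝ} (hs : 0 ≤ s) {x : E} : gauge W x ≤ s ↔ x ∈ s • W := by
  rcases hs.eq_or_lt with rfl | hs
  · have hbdd : Bornology.IsVonNBounded ℝ W :=
      (NormedSpace.isVonNBounded_iff ℝ).2 hWc.isBounded
    rw [zero_smul_set ⟨0, mem_of_mem_nhds hW0⟩, Set.mem_zero,
      ← gauge_eq_zero (absorbent_nhds_zero hW0) hbdd, (gauge_nonneg x).ge_iff_eq']
  · have h := gauge_le_one_iff_mem_closure hW hW0 (x := s⁻¹ • x)
    rw [hWc.isClosed.closure_eq] at h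
    rw [mem_smul_set_iff_inv_smul_mem₀ hs.ne', ← h, gauge_smul_of_nonneg (inv_nonneg.2 hs.le),
      smul_eq_mul, inv_mul_le_iff₀ hs, mul_one]

theorem exists_sub_eq_gauge_add_gauge_le {K : Set E} (hK : Convex ℝ K) (h0 : (0 : E) ∈ K)
    {r : ℝ} (hr : 0 ≤ r) {z : E} (hz : z ∈ r • convexHull ℝ (K ∪ -K)) :
    ∃ u v, z = u - v ∧ gauge K u + gauge K v ≤ r := by
  obtain ⟨d, hd, rfl⟩ := hz
  rw [hK.convexHull_union hK.neg ⟨0, h0⟩ ⟨0, by simpa using h0⟩, mem_convexJoin] at hd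
  obtain ⟨a, ha, b, hb, α, β, hα, hβ, hαβ, rfl⟩ := hd
  refine ⟨(r * α) • a, (r * β) • -b, by module, ?_⟩
  calc gauge K ((r * α) • a) + gauge K ((r * β) • -b) ≤ r * α + r * β :=
        add_le_add (gauge_le_of_mem (by positivity) (smul_mem_smul_set ha))
          (gauge_le_of_mem (by positivity) (smul_mem_smul_set (Set.mem_neg.1 hb)))
    _ = r := by rw [← mul_add, hαβ, mul_one]

theorem vadd_smul_subset_setOf_gauge_add_gauge_le {K : Set E} (hK : Convex ℝ K)
    (hK0 : K ∈ 𝓝 0) {u v : E} {r : ℝ} (huv : gauge K u + gauge K v ≤ r) (hr : r ≤ 1) :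
    v +ᵥ ((1 - r) / 2) • K ⊆ {w | gauge K (u - v + w) + gauge K w ≤ 1} := by
  rintro _ ⟨_, ⟨k, hk, rfl⟩, rfl⟩
  have habs := absorbent_nhds_zero (𝕜 := ℝ) hK0
  have hk' : gauge K (((1 - r) / 2) • k) ≤ (1 - r) / 2 :=
    gauge_le_of_mem (by linarith) (smul_mem_smul_set hk)
  have h1 := gauge_add_le hK habs u (((1 - r) / 2) • k)
  have h2 := gauge_add_le hK habs v (((1 - r) / 2) • k)
  change gauge K (u - v + (v + ((1 - r) / 2) • k)) + gauge K (v + ((1 - r) / 2) • k) ≤ 1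
  rw [show u - v + (v + ((1 - r) / 2) • k) = u + ((1 - r) / 2) • k by abel]
  linarith

/-- The layer-cake integral `∫₀¹ (1 - s) ^ d d(s ^ d) = 1 / (2d choose d)`; only
`0 < layerCakeConst d < ∞` is used. -/
noncomputable def layerCakeConst (d : ℕ) : ℝ≥0∞ :=
  ∫⁻ t in Ioi (0 : ℝ), ENNReal.ofReal (1 - t ^ (d : ℝ)⁻¹) ^ d

theorem layerCakeConst_ne_zero {d : ℕ} (hd : 0 < d) : layerCakeConst d ≠ 0 := by
  refine (setLIntegral_pos_iff (by fun_prop)).2 ?_ |>.ne'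
  refine (by simp : (0 : ℝ≥0∞) < volume (Ioo (0 : ℝ) 1)).trans_le
    (measure_mono fun t ht ↦ ⟨?_, ht.1⟩)
  have : t ^ (d : ℝ)⁻¹ < 1 := Real.rpow_lt_one ht.1.le ht.2 (by positivity)
  simpa [Function.mem_support, hd.ne'] using this

theorem layerCakeConst_ne_top {d : ℕ} (hd : 0 < d) : layerCakeConst d ≠ ⊤ := by
  refine ne_top_of_le_ne_top (measure_Ioc_lt_top (μ := volume) (a := (0 : ℝ)) (b := 1)).ne ?_
  calc layerCakeConst d ≤ ∫⁻ t in Ioi 0, (Iic (1 : ℝ)).indicator 1 t :=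
        setLIntegral_mono (measurable_one.indicator measurableSet_Iic) fun t ht ↦ ?_
    _ = volume (Ioc (0 : ℝ) 1) := by
        rw [lintegral_indicator_one measurableSet_Iic, Measure.restrict_apply measurableSet_Iic,
          Iic_inter_Ioi]
  rcases le_or_gt t 1 with ht1 | ht1
  · rw [indicator_of_mem (mem_Iic.2 ht1), Pi.one_apply]
    refine pow_le_one₀ zero_le (ENNReal.ofReal_le_one.2 ?_)
    linarith [Real.rpow_nonneg (le_of_lt ht) (d : ℝ)⁻¹]
  · have : 1 ≤ t ^ (d : ℝ)⁻¹ := Real.one_le_rpow ht1.le (by positivity)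
    rw [ENNReal.ofReal_of_nonpos (by linarith), zero_pow hd.ne']
    exact zero_le

variable [MeasurableSpace E] [BorelSpace E] [FiniteDimensional ℝ E] (μ : Measure E)
  [μ.IsAddHaarMeasure]

theorem addHaar_setOf_gauge_le (hd : 0 < finrank ℝ E) {W : Set E} (hW : Convex ℝ W)
    (hWc : IsCompact W) (hW0 : W ∈ 𝓝 0) (s : ℝ) :
    μ {x | gauge W x ≤ s} = ENNReal.ofReal s ^ finrank ℝ E * μ W := by
  rcases lt_or_ge s 0 with hs | hs
  · have : {x | gauge W x ≤ s} = ∅ :=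
      eq_empty_of_forall_notMem fun x hx ↦ (hs.trans_le (gauge_nonneg x)).not_ge hx
    rw [this, measure_empty, ENNReal.ofReal_of_nonpos hs.le, zero_pow hd.ne', zero_mul]
  · rw [show {x | gauge W x ≤ s} = s • W from ext fun x ↦ gauge_le_iff_mem_smul hW hWc hW0 hs,
      Measure.addHaar_smul_of_nonneg μ hs, ENNReal.ofReal_pow hs]

theorem lintegral_ofReal_one_sub_gauge_pow (hd : 0 < finrank ℝ E) {W : Set E} (hW : Convex ℝ W)
    (hWc : IsCompact W) (hW0 : W ∈ 𝓝 0) :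
    ∫⁻ x, ENNReal.ofReal (1 - gauge W x) ^ finrank ℝ E ∂μ =
      layerCakeConst (finrank ℝ E) * μ W := by
  set d := finrank ℝ E
  have hpos : ∀ x,
      ENNReal.ofReal (1 - gauge W x) ^ d = ENNReal.ofReal (max 0 (1 - gauge W x) ^ d) := fun x ↦ by
    rw [ENNReal.ofReal_pow (le_max_left _ _), ENNReal.ofReal_max, ENNReal.ofReal_zero,
      max_eq_right zero_le]
  have hlevel : ∀ t ∈ Ioi (0 : ℝ),
      μ {x | t ≤ max 0 (1 - gauge W x) ^ d} = ENNReal.ofReal (1 - t ^ (d : ℝ)⁻¹) ^ d * μ W := by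
    intro t ht
    have hroot : 0 < t ^ (d : ℝ)⁻¹ := Real.rpow_pos_of_pos ht _
    rw [← addHaar_setOf_gauge_le μ hd hW hWc hW0]
    congr 1
    ext x
    rw [mem_ofPred_eq, mem_ofPred_eq, ← Real.rpow_natCast,
      ← Real.rpow_inv_le_iff_of_pos (le_of_lt ht) (le_max_left _ _) (by positivity), le_max_iff]
    constructor
    · rintro (h | h) <;> linarith
    · intro h; right; linarith
  simp_rw [hpos]
  rw [lintegral_eq_lintegral_meas_le μ (ae_of_all _ fun x ↦ by positivity) (by fun_prop),
    setLIntegral_congr_fun measurableSet_Ioi hlevel,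
    lintegral_mul_const _ (by fun_prop), layerCakeConst]

theorem ofReal_one_sub_gauge_convexHull_pow_mul_le (hd : 0 < finrank ℝ E) {K : Set E}
    (hK : Convex ℝ K) (hKc : IsCompact K) (hK0 : K ∈ 𝓝 0) (z : E) :
    ENNReal.ofReal (1 - gauge (convexHull ℝ (K ∪ -K)) z) ^ finrank ℝ E * μ K ≤
      2 ^ finrank ℝ E * μ {w | gauge K (z + w) + gauge K w ≤ 1} := by
  set D := convexHull ℝ (K ∪ -K)
  set r := gauge D z
  rcases le_or_gt 1 r with hr | hr
  · rw [ENNReal.ofReal_of_nonpos (by linarith), zero_pow hd.ne', zero_mul]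
    exact zero_le
  have hD0 : D ∈ 𝓝 0 := mem_of_superset hK0 (subset_union_left.trans (subset_convexHull ℝ _))
  have hzD : z ∈ r • D := (gauge_le_iff_mem_smul (convex_convexHull ℝ _)
    (hKc.convexHull_union_neg hK ⟨0, mem_of_mem_nhds hK0⟩) hD0 (gauge_nonneg z)).1 le_rfl
  obtain ⟨u, v, rfl, huv⟩ :=
    exists_sub_eq_gauge_add_gauge_le hK (mem_of_mem_nhds hK0) (gauge_nonneg _) hzD
  have hc : 0 ≤ (1 - r) / 2 := by linarith
  calc ENNReal.ofReal (1 - r) ^ finrank ℝ E * μ K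
      = 2 ^ finrank ℝ E * μ (v +ᵥ ((1 - r) / 2) • K) := by
        rw [measure_vadd, Measure.addHaar_smul_of_nonneg μ hc, ← mul_assoc,
          ← ENNReal.ofReal_pow (by linarith), ← ENNReal.ofReal_ofNat 2,
          ← ENNReal.ofReal_pow zero_le_two, ← ENNReal.ofReal_mul (by positivity), ← mul_pow]
        congr 3
        ring
    _ ≤ _ := by gcongr; exact vadd_smul_subset_setOf_gauge_add_gauge_le hK hK0 huv hr.le

theorem lintegral_addHaar_setOf_gauge_add_gauge_le (hd : 0 < finrank ℝ E) {K : Set E}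
    (hK : Convex ℝ K) (hKc : IsCompact K) (hK0 : K ∈ 𝓝 0) :
    ∫⁻ z, μ {w | gauge K (z + w) + gauge K w ≤ 1} ∂μ =
      layerCakeConst (finrank ℝ E) * μ K * μ K := by
  have hS : MeasurableSet {p : E × E | gauge K (p.1 + p.2) + gauge K p.2 ≤ 1} :=
    (isClosed_le (by fun_prop) continuous_const).measurableSet
  have hfiber : ∀ w, μ {z | gauge K (z + w) + gauge K w ≤ 1} =
      ENNReal.ofReal (1 - gauge K w) ^ finrank ℝ E * μ K := fun w ↦ by
    rw [← addHaar_setOf_gauge_le μ hd hK hKc hK0,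
      ← measure_preimage_add_right μ w {x | gauge K x ≤ 1 - gauge K w}]
    congr 1
    ext z
    simp only [mem_ofPred_eq, mem_preimage]
    constructor <;> intro h <;> linarith
  calc ∫⁻ z, μ {w | gauge K (z + w) + gauge K w ≤ 1} ∂μ
      = ∫⁻ w, μ {z | gauge K (z + w) + gauge K w ≤ 1} ∂μ :=
        (Measure.prod_apply hS).symm.trans (Measure.prod_apply_symm hS)
    _ = layerCakeConst (finrank ℝ E) * μ K * μ K := by
        simp_rw [hfiber]
        rw [lintegral_mul_const _ (by fun_prop), lintegral_ofReal_one_sub_gauge_pow μ hd hK hKc hK0]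

theorem addHaar_convexHull_union_neg_le_of_mem_nhds (hd : 0 < finrank ℝ E) {K : Set E}
    (hK : Convex ℝ K) (hKc : IsCompact K) (hK0 : K ∈ 𝓝 0) :
    μ (convexHull ℝ (K ∪ -K)) ≤ 2 ^ finrank ℝ E * μ K := by
  set D := convexHull ℝ (K ∪ -K)
  set c := layerCakeConst (finrank ℝ E)
  have hD0 : D ∈ 𝓝 0 := mem_of_superset hK0 (subset_union_left.trans (subset_convexHull ℝ _))
  have hgD : Continuous (gauge D) := continuous_gauge (convex_convexHull ℝ _) hD0
  have key : c * μ K * μ D ≤ c * μ K * (2 ^ finrank ℝ E * μ K) :=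
    calc c * μ K * μ D = ∫⁻ z, ENNReal.ofReal (1 - gauge D z) ^ finrank ℝ E * μ K ∂μ := by
          rw [lintegral_mul_const _ (by fun_prop), lintegral_ofReal_one_sub_gauge_pow μ hd
            (convex_convexHull ℝ _) (hKc.convexHull_union_neg hK ⟨0, mem_of_mem_nhds hK0⟩) hD0]
          ring
      _ ≤ ∫⁻ z, 2 ^ finrank ℝ E * μ {w | gauge K (z + w) + gauge K w ≤ 1} ∂μ :=
          lintegral_mono (ofReal_one_sub_gauge_convexHull_pow_mul_le μ hd hK hKc hK0)
      _ = c * μ K * (2 ^ finrank ℝ E * μ K) := by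
          rw [lintegral_const_mul' _ _ (by simp),
            lintegral_addHaar_setOf_gauge_add_gauge_le μ hd hK hKc hK0]
          ring
  have hKpos : μ K ≠ 0 := (Measure.measure_pos_of_mem_nhds μ hK0).ne'
  exact (ENNReal.mul_le_mul_iff_right (mul_ne_zero (layerCakeConst_ne_zero hd) hKpos)
    (ENNReal.mul_ne_top (layerCakeConst_ne_top hd) hKc.measure_lt_top.ne)).1 key

theorem addHaar_convexHull_union_neg_le {K : Set E} (hK : Convex ℝ K) (hKc : IsCompact K)
    (h0 : (0 : E) ∈ K) : μ (convexHull ℝ (K ∪ -K)) ≤ 2 ^ finrank ℝ E * μ K := by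
  rcases (finrank ℝ E).eq_zero_or_pos with hd | hd
  · have : Subsingleton E := finrank_zero_iff.1 hd
    rw [hd, pow_zero, one_mul, Subsingleton.eq_univ_of_nonempty ⟨0, h0⟩]
    exact measure_mono (subset_univ _)
  -- `K` may have `0` on its boundary, so pass to the thickenings `cthickening ε K`.
  have hthick : ∀ ε > 0,
      μ (convexHull ℝ (K ∪ -K)) ≤ 2 ^ finrank ℝ E * μ (cthickening ε K) := by
    intro ε hε
    have hsub := self_subset_cthickening (δ := ε) K
    refine (measure_mono (convexHull_mono (union_subset_union hsub (neg_subset_neg.2 hsub)))).trans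
      ?_
    exact addHaar_convexHull_union_neg_le_of_mem_nhds μ hd (hK.cthickening ε) hKc.cthickening
      (mem_of_superset (closedBall_mem_nhds 0 hε) (closedBall_subset_cthickening h0 ε))
  have htend : Tendsto (fun ε ↦ 2 ^ finrank ℝ E * μ (cthickening ε K)) (𝓝[>] 0)
      (𝓝 (2 ^ finrank ℝ E * μ K)) :=
    ENNReal.Tendsto.const_mul ((tendsto_measure_cthickening_of_isCompact hKc).mono_left
      nhdsWithin_le_nhds) (Or.inr (by simp))
  exact ge_of_tendsto htend (eventually_mem_nhdsWithin.mono hthick)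

theorem volume_convexHull_union_neg_le_general (n : ℕ) (K : Set (EuclideanSpace ℝ (Fin n)))
    (hK : Convex ℝ K) (hKc : IsCompact K)
    (h0 : (0 : EuclideanSpace ℝ (Fin n)) ∈ K) :
    volume (convexHull ℝ (K ∪ -K)) ≤ 2 ^ n * volume K := by
  simpa [finrank_euclideanSpace_fin] using addHaar_convexHull_union_neg_le volume hK hKc h0

theorem volume_convexHull_union_neg_le (n : ℕ) (K : Set (EuclideanSpace ℝ (Fin n)))
    (hK : Convex ℝ K) (hKc : IsCompact K) (hKi : (interior K).Nonempty)
    (h0 : (0 : EuclideanSpace ℝ (Fin n)) ∈ K) :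
    volume (convexHull ℝ (K ∪ -K)) ≤ 2 ^ n * volume K :=
  volume_convexHull_union_neg_le_general n K hK hKc h0
end

section
/- Let f, g : ℝ^n → [0,∞) be integrable log-concave functions and λ ∈ (0,1). Define the λ-difference function Δ(z) = sup over pairs (x,y) with (1-λ)x + λy = z of f(x/(1-λ))^(1-λ) · g(-y/λ)^λ. Then (∫ Δ) · (∫ f^λ g^(1-λ)) ≤ (∫ f) · (∫ g). -/
/-!
For a decomposition `z = (1 - λ) x + λ y`, log-concavity of `f` and `g` at weight `λ` gives
`f (x / (1 - λ)) ^ (1 - λ) * g (-y / λ) ^ λ * (f w ^ λ * g w ^ (1 - λ))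
  ≤ f (x + λ w) * g ((1 - λ) w - y)` for every `w`.
Integrating in `w` and translating `w` by `-y / (1 - λ)`, the right side becomes
`K z = ∫ f (z / (1 - λ) + λ w) * g ((1 - λ) w) dw`, which no longer depends on the decomposition,
so `Δ z * ∫ f ^ λ g ^ (1 - λ) ≤ K z`. By Tonelli, `∫ K` is `∫ f * ∫ g` times the Jacobians of
`z ↦ z / (1 - λ)` and `w ↦ (1 - λ) w`, which cancel.
-/

open MeasureTheory Module
open scoped ENNReal

section Haar

variable {E : Type*} [NormedAddCommGroup E] [NormedSpace ℝ E] [FiniteDimensional ℝ E]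
  [MeasurableSpace E] [BorelSpace E] (μ : Measure E) [μ.IsAddHaarMeasure]

theorem lintegral_comp_smul (f : E → ℝ≥0∞) {r : ℝ} (hr : r ≠ 0) :
    ∫⁻ x, f (r • x) ∂μ = ENNReal.ofReal |(r ^ finrank ℝ E)⁻¹| * ∫⁻ x, f x ∂μ := by
  rw [← smul_eq_mul, ← lintegral_smul_measure, ← Measure.map_addHaar_smul μ hr]
  exact (lintegral_map_equiv f (MeasurableEquiv.smul₀ r hr)).symm

theorem lintegral_comp_smul_add (f : E → ℝ≥0∞) {r : ℝ} (hr : r ≠ 0) (a : E) :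
    ∫⁻ x, f (r • x + a) ∂μ = ENNReal.ofReal |(r ^ finrank ℝ E)⁻¹| * ∫⁻ x, f x ∂μ := by
  rw [← lintegral_comp_smul μ f hr,
    ← lintegral_add_right_eq_self (fun x => f (r • x)) (r⁻¹ • a)]
  simp only [smul_add, smul_inv_smul₀ hr]

theorem quasiMeasurePreserving_smul_add_smul {c t : ℝ} (hc : c ≠ 0) (ht : t ≠ 0) :
    Measure.QuasiMeasurePreserving (fun p : E × E => c • p.1 + t • p.2) (μ.prod μ) μ :=
  (quasiMeasurePreserving_add μ μ).comp <| QuasiMeasurePreserving.prodMap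
    (Measure.quasiMeasurePreserving_smul μ hc) (Measure.quasiMeasurePreserving_smul μ ht)

theorem lintegral_lintegral_comp_smul_add_mul_comp_smul {F G : E → ℝ≥0∞}
    (hF : AEMeasurable F μ) (hG : AEMeasurable G μ) {c t : ℝ} (hc : c ≠ 0) (ht : t ≠ 0) :
    ∫⁻ z, ∫⁻ w, F (c⁻¹ • z + t • w) * G (c • w) ∂μ ∂μ = (∫⁻ x, F x ∂μ) * ∫⁻ x, G x ∂μ := by
  have hGc : AEMeasurable (fun w => G (c • w)) μ :=
    hG.comp_quasiMeasurePreserving (Measure.quasiMeasurePreserving_smul μ hc)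
  have hmeas : AEMeasurable (Function.uncurry fun z w => F (c⁻¹ • z + t • w) * G (c • w))
      (μ.prod μ) :=
    (hF.comp_quasiMeasurePreserving
      (quasiMeasurePreserving_smul_add_smul μ (inv_ne_zero hc) ht)).mul
      (hGc.comp_quasiMeasurePreserving Measure.quasiMeasurePreserving_snd)
  have hscale :
      ENNReal.ofReal |((c⁻¹) ^ finrank ℝ E)⁻¹| * ENNReal.ofReal |(c ^ finrank ℝ E)⁻¹| = 1 := by
    rw [← ENNReal.ofReal_mul (abs_nonneg _), ← abs_mul, inv_pow, inv_inv,
      mul_inv_cancel₀ (pow_ne_zero _ hc), abs_one, ENNReal.ofReal_one]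
  calc ∫⁻ z, ∫⁻ w, F (c⁻¹ • z + t • w) * G (c • w) ∂μ ∂μ
      = ∫⁻ w, (∫⁻ z, F (c⁻¹ • z + t • w) ∂μ) * G (c • w) ∂μ := by
        rw [lintegral_lintegral_swap hmeas]
        refine lintegral_congr fun w => lintegral_mul_const'' _ ?_
        exact hF.comp_quasiMeasurePreserving
          ((measurePreserving_add_right μ _).quasiMeasurePreserving.comp
            (Measure.quasiMeasurePreserving_smul μ (inv_ne_zero hc)))
    _ = (ENNReal.ofReal |((c⁻¹) ^ finrank ℝ E)⁻¹| * ∫⁻ x, F x ∂μ) * ∫⁻ w, G (c • w) ∂μ := by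
        simp_rw [lintegral_comp_smul_add μ F (inv_ne_zero hc)]
        exact lintegral_const_mul'' _ hGc
    _ = (∫⁻ x, F x ∂μ) * ∫⁻ x, G x ∂μ := by
        rw [lintegral_comp_smul μ G hc, mul_mul_mul_comm, hscale, one_mul]

end Haar

theorem ENNReal.ofReal_iSup_mul_le {ι : Sort*} {a : ι → ℝ} {c b : ℝ≥0∞}
    (h : ∀ i, ENNReal.ofReal (a i) * c ≤ b) : ENNReal.ofReal (⨆ i, a i) * c ≤ b := by
  have hsup : ENNReal.ofReal (⨆ i, a i) ≤ ⨆ i, ENNReal.ofReal (a i) := by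
    rcases isEmpty_or_nonempty ι with _ | _
    · simp [Real.iSup_of_isEmpty]
    by_cases hbdd : BddAbove (Set.range a)
    · exact (Monotone.map_ciSup_of_continuousAt ENNReal.continuous_ofReal.continuousAt
        ENNReal.ofReal_mono hbdd).le
    · simp [Real.iSup_of_not_bddAbove hbdd]
  calc ENNReal.ofReal (⨆ i, a i) * c ≤ (⨆ i, ENNReal.ofReal (a i)) * c := by gcongr
    _ = ⨆ i, ENNReal.ofReal (a i) * c := ENNReal.iSup_mul _ _
    _ ≤ b := iSup_le h

def IsLogConcave {E : Type*} [AddCommGroup E] [Module ℝ E] (f : E → ℝ) : Prop :=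
  ∀ x y : E, ∀ t : ℝ, t ∈ Set.Icc (0:ℝ) 1 → f x ^ (1 - t) * f y ^ t ≤ f ((1 - t) • x + t • y)

namespace IsLogConcave

variable {E : Type*} [AddCommGroup E] [Module ℝ E] {f g : E → ℝ}

theorem rpow_mul_rpow_mul_le (hf : IsLogConcave f) (hg : IsLogConcave g) (hf0 : ∀ x, 0 ≤ f x)
    (hg0 : ∀ x, 0 ≤ g x) {t : ℝ} (ht : t ∈ Set.Icc (0:ℝ) 1) (u v w : E) :
    (f u ^ (1 - t) * g v ^ t) * (f w ^ t * g w ^ (1 - t)) ≤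
      f ((1 - t) • u + t • w) * g ((1 - t) • w + t • v) :=
  calc (f u ^ (1 - t) * g v ^ t) * (f w ^ t * g w ^ (1 - t))
      = (f u ^ (1 - t) * f w ^ t) * (g w ^ (1 - t) * g v ^ t) := by ring
    _ ≤ f ((1 - t) • u + t • w) * g ((1 - t) • w + t • v) :=
      mul_le_mul (hf u w t ht) (hg w v t ht)
        (mul_nonneg (Real.rpow_nonneg (hg0 _) _) (Real.rpow_nonneg (hg0 _) _)) (hf0 _)

variable [MeasurableSpace E] [MeasurableAdd E] (μ : Measure E) [μ.IsAddRightInvariant]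

theorem ofReal_mul_lintegral_le (hf : IsLogConcave f) (hg : IsLogConcave g)
    (hf0 : ∀ x, 0 ≤ f x) (hg0 : ∀ x, 0 ≤ g x) {l : ℝ} (hl : l ∈ Set.Ioo (0:ℝ) 1) {x y z : E}
    (hz : (1 - l) • x + l • y = z) :
    ENNReal.ofReal (f ((1 - l)⁻¹ • x) ^ (1 - l) * g (-(l⁻¹ • y)) ^ l) *
        ∫⁻ w, ENNReal.ofReal (f w ^ l * g w ^ (1 - l)) ∂μ ≤
      ∫⁻ w, ENNReal.ofReal (f ((1 - l)⁻¹ • z + l • w)) * ENNReal.ofReal (g ((1 - l) • w)) ∂μ := by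
  obtain ⟨hl0, hl1⟩ := hl
  set s : E := -((1 - l)⁻¹ • y)
  rw [← lintegral_add_right_eq_self
      (fun w => ENNReal.ofReal (f ((1 - l)⁻¹ • z + l • w)) * ENNReal.ofReal (g ((1 - l) • w))) s,
    ← lintegral_const_mul' _ _ ENNReal.ofReal_ne_top]
  refine lintegral_mono fun w => ?_
  have key := rpow_mul_rpow_mul_le hf hg hf0 hg0 ⟨hl0.le, hl1.le⟩
    ((1 - l)⁻¹ • x) (-(l⁻¹ • y)) w
  have hfarg : (1 - l) • ((1 - l)⁻¹ • x) + l • w = (1 - l)⁻¹ • z + l • (w + s) := by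
    subst hz
    match_scalars <;> field_simp
    ring
  have hgarg : (1 - l) • w + l • -(l⁻¹ • y) = (1 - l) • (w + s) := by
    match_scalars <;> field_simp
  rw [hfarg, hgarg] at key
  rw [← ENNReal.ofReal_mul (mul_nonneg (Real.rpow_nonneg (hf0 _) _) (Real.rpow_nonneg (hg0 _) _)),
    ← ENNReal.ofReal_mul (hf0 _)]
  exact ENNReal.ofReal_le_ofReal key

end IsLogConcave

theorem lambda_difference_function_inequality (n : ℕ)
    (f g : EuclideanSpace ℝ (Fin n) → ℝ)
    (hf0 : ∀ x, 0 ≤ f x) (hg0 : ∀ x, 0 ≤ g x)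
    (hflc : ∀ x y : EuclideanSpace ℝ (Fin n), ∀ t : ℝ, t ∈ Set.Icc (0:ℝ) 1 →
      f x ^ (1 - t) * f y ^ t ≤ f ((1 - t) • x + t • y))
    (hglc : ∀ x y : EuclideanSpace ℝ (Fin n), ∀ t : ℝ, t ∈ Set.Icc (0:ℝ) 1 →
      g x ^ (1 - t) * g y ^ t ≤ g ((1 - t) • x + t • y))
    (hfi : Integrable f volume) (hgi : Integrable g volume)
    (l : ℝ) (hl : l ∈ Set.Ioo (0:ℝ) 1)
    (Δ : EuclideanSpace ℝ (Fin n) → ℝ)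
    (hΔ : ∀ z, Δ z = ⨆ p : {p : EuclideanSpace ℝ (Fin n) × EuclideanSpace ℝ (Fin n) //
        (1 - l) • p.1 + l • p.2 = z},
      f ((1 - l)⁻¹ • p.1.1) ^ (1 - l) * g (-(l⁻¹ • p.1.2)) ^ l) :
    (∫⁻ z, ENNReal.ofReal (Δ z)) * (∫⁻ x, ENNReal.ofReal (f x ^ l * g x ^ (1 - l))) ≤
      (∫⁻ x, ENNReal.ofReal (f x)) * (∫⁻ x, ENNReal.ofReal (g x)) :=
  calc (∫⁻ z, ENNReal.ofReal (Δ z)) * (∫⁻ x, ENNReal.ofReal (f x ^ l * g x ^ (1 - l)))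
      ≤ ∫⁻ z, ENNReal.ofReal (Δ z) * (∫⁻ x, ENNReal.ofReal (f x ^ l * g x ^ (1 - l))) :=
        lintegral_mul_const_le _ _
    _ ≤ ∫⁻ z, ∫⁻ w, ENNReal.ofReal (f ((1 - l)⁻¹ • z + l • w)) *
          ENNReal.ofReal (g ((1 - l) • w)) :=
        lintegral_mono fun z => by
          rw [hΔ z]
          exact ENNReal.ofReal_iSup_mul_le fun p =>
            IsLogConcave.ofReal_mul_lintegral_le volume hflc hglc hf0 hg0 hl p.2
    _ = (∫⁻ x, ENNReal.ofReal (f x)) * (∫⁻ x, ENNReal.ofReal (g x)) :=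
        lintegral_lintegral_comp_smul_add_mul_comp_smul volume hfi.aemeasurable.ennreal_ofReal
          hgi.aemeasurable.ennreal_ofReal (sub_pos.2 hl.2).ne' hl.1.ne'
end

section
/- For a convex body K in ℝ^n with 0 in its interior, ∫_{ℝ^n} exp(-h_{K°}(x)) dx = n! · Vol(K), where h_{K°} is the support function of the polar body of K. -/
open MeasureTheory Filter Function Set Real Metric Bornology
open scoped ENNReal Pointwise RealInnerProductSpace Nat

/-!
The support function `h` of `K°` is positively homogeneous, and by Hahn–Banach (the one-sided
bipolar theorem) `{h ≤ 1} = K`, so `{h ≤ t} = t • K` for `t > 0`. Writing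
`exp (-h x) = ∫_{h x}^∞ exp (-t) dt` and exchanging the integrals gives
`∫ exp (-h) = ∫_0^∞ exp (-t) vol (t • K) dt = vol K * ∫_0^∞ exp (-t) t ^ n dt = n! * vol K`.
-/

section Polar

variable {E : Type*} [NormedAddCommGroup E] [InnerProductSpace ℝ E]

/-- The polar body `K°`; unlike `StrongDual.polar`, the condition is one-sided, without `|·|`. -/
def innerPolar (K : Set E) : Set E := {u | ∀ z ∈ K, ⟪z, u⟫ ≤ 1}

noncomputable def supportFunction (L : Set E) (x : E) : ℝ := ⨆ y : L, ⟪x, (y : E)⟫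

theorem zero_mem_innerPolar (K : Set E) : (0 : E) ∈ innerPolar K := fun z _ => by simp

theorem innerPolar_subset_closedBall {K : Set E} {r : ℝ} (hr : 0 < r)
    (hK : closedBall 0 r ⊆ K) : innerPolar K ⊆ closedBall 0 r⁻¹ := by
  intro u hu
  rw [mem_closedBall_zero_iff, ← mul_one r⁻¹, le_inv_mul_iff₀ hr]
  rcases eq_or_ne u 0 with rfl | hu0
  · simp
  have hnu : 0 < ‖u‖ := norm_pos_iff.2 hu0
  have hz : (r * ‖u‖⁻¹) • u ∈ K := hK <| by
    rw [mem_closedBall_zero_iff, norm_smul, norm_mul, norm_inv, norm_norm, Real.norm_of_nonneg hr.le,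
      inv_mul_cancel_right₀ hnu.ne']
  have := hu _ hz
  rw [real_inner_smul_left, real_inner_self_eq_norm_sq] at this
  field_simp at this
  exact this

theorem bddAbove_range_inner {L : Set E} (hL : IsBounded L) (x : E) :
    BddAbove (range fun y : L => ⟪x, (y : E)⟫) := by
  obtain ⟨C, hC⟩ := isBounded_iff_forall_norm_le.1 hL
  refine ⟨‖x‖ * C, ?_⟩
  rintro _ ⟨⟨y, hy⟩, rfl⟩
  exact (real_inner_le_norm x y).trans (mul_le_mul_of_nonneg_left (hC y hy) (norm_nonneg x))

theorem le_supportFunction {L : Set E} (hL : IsBounded L) (x : E) {y : E} (hy : y ∈ L) :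
    ⟪x, y⟫ ≤ supportFunction L x :=
  le_ciSup (bddAbove_range_inner hL x) (⟨y, hy⟩ : L)

theorem supportFunction_le {L : Set E} [Nonempty L] {x : E} {t : ℝ}
    (h : ∀ y ∈ L, ⟪x, y⟫ ≤ t) : supportFunction L x ≤ t :=
  ciSup_le fun y => h y y.2

theorem supportFunction_nonneg {L : Set E} (hL : IsBounded L) (h0 : (0 : E) ∈ L) (x : E) :
    0 ≤ supportFunction L x := by
  simpa using le_supportFunction hL x h0

theorem supportFunction_smul (L : Set E) {t : ℝ} (ht : 0 ≤ t) (x : E) :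
    supportFunction L (t • x) = t * supportFunction L x := by
  simp only [supportFunction, real_inner_smul_left, Real.mul_iSup_of_nonneg ht]

theorem lowerSemicontinuous_supportFunction {L : Set E} (hL : IsBounded L) :
    LowerSemicontinuous (supportFunction L) :=
  lowerSemicontinuous_ciSup (bddAbove_range_inner hL) fun _ =>
    (continuous_id.inner continuous_const).lowerSemicontinuous

variable [CompleteSpace E]

theorem exists_mem_innerPolar_one_lt_inner {K : Set E} (hK : Convex ℝ K) (hKc : IsClosed K)
    (h0 : (0 : E) ∈ K) {x : E} (hx : x ∉ K) : ∃ u ∈ innerPolar K, 1 < ⟪x, u⟫ := by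
  obtain ⟨f, c, hfK, hfx⟩ := geometric_hahn_banach_closed_point hK hKc hx
  have hc : 0 < c := by simpa using hfK 0 h0
  set v := (InnerProductSpace.toDual ℝ E).symm f
  have hv : ∀ z, ⟪z, v⟫ = f z := fun z => by
    rw [real_inner_comm]; exact InnerProductSpace.toDual_symm_apply
  refine ⟨c⁻¹ • v, fun z hz => ?_, ?_⟩
  · rw [real_inner_smul_right, hv, inv_mul_le_one₀ hc]
    exact (hfK z hz).le
  · rw [real_inner_smul_right, hv, one_lt_inv_mul₀ hc]
    exact hfx

theorem supportFunction_innerPolar_le_one_iff {K : Set E} (hK : Convex ℝ K) (hKc : IsClosed K)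
    (h0 : (0 : E) ∈ K) (hb : IsBounded (innerPolar K)) {x : E} :
    supportFunction (innerPolar K) x ≤ 1 ↔ x ∈ K := by
  have : Nonempty (innerPolar K) := ⟨⟨0, zero_mem_innerPolar K⟩⟩
  refine ⟨fun hx => ?_, fun hx => supportFunction_le fun u hu => hu x hx⟩
  by_contra hxK
  obtain ⟨u, hu, hxu⟩ := exists_mem_innerPolar_one_lt_inner hK hKc h0 hxK
  exact (hxu.trans_le (le_supportFunction hb x hu)).not_ge hx

theorem setOf_supportFunction_innerPolar_le {K : Set E} (hK : Convex ℝ K) (hKc : IsClosed K)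
    (h0 : (0 : E) ∈ K) (hb : IsBounded (innerPolar K)) {t : ℝ} (ht : 0 < t) :
    {x | supportFunction (innerPolar K) x ≤ t} = t • K := by
  ext x
  rw [mem_smul_set_iff_inv_smul_mem₀ ht.ne', ← supportFunction_innerPolar_le_one_iff hK hKc h0 hb,
    supportFunction_smul _ (inv_nonneg.2 ht.le), inv_mul_le_one₀ ht]
  rfl

end Polar

theorem lintegral_exp_neg_Ioi (a : ℝ) :
    ∫⁻ t in Ioi a, ENNReal.ofReal (exp (-t)) = ENNReal.ofReal (exp (-a)) := by
  rw [← ofReal_integral_eq_lintegral_ofReal, integral_exp_neg_Ioi]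
  · exact (by simpa using exp_neg_integrableOn_Ioi a one_pos :
      IntegrableOn (fun t => exp (-t)) (Ioi a))
  · exact ae_of_all _ fun t => (exp_pos _).le

theorem lintegral_exp_neg_mul_pow_Ioi (n : ℕ) :
    ∫⁻ t in Ioi 0, ENNReal.ofReal (exp (-t)) * ENNReal.ofReal t ^ n = n ! := by
  have hint : IntegrableOn (fun t : ℝ => exp (-t) * t ^ n) (Ioi 0) := by
    simpa [Real.rpow_natCast] using Real.GammaIntegral_convergent (s := (n : ℝ) + 1) (by positivity)
  calc ∫⁻ t in Ioi 0, ENNReal.ofReal (exp (-t)) * ENNReal.ofReal t ^ n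
      = ∫⁻ t in Ioi 0, ENNReal.ofReal (exp (-t) * t ^ n) := by
        refine setLIntegral_congr_fun measurableSet_Ioi fun t ht => ?_
        rw [ENNReal.ofReal_mul (exp_pos _).le, ENNReal.ofReal_pow (le_of_lt ht)]
    _ = ENNReal.ofReal (Gamma (n + 1)) := by
        rw [← ofReal_integral_eq_lintegral_ofReal hint, Gamma_eq_integral (by positivity)]
        · simp [Real.rpow_natCast]
        · exact (ae_restrict_iff' measurableSet_Ioi).2 <| ae_of_all _ fun t ht =>
            mul_nonneg (exp_pos _).le (pow_nonneg (le_of_lt ht) n)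
    _ = n ! := by rw [Gamma_nat_eq_factorial, ENNReal.ofReal_natCast]

section

variable {α : Type*} [MeasurableSpace α]

theorem lintegral_exp_neg_eq_lintegral_measure_le (μ : Measure α) [SFinite μ] {g : α → ℝ}
    (hg : Measurable g) (hg0 : ∀ x, 0 ≤ g x) :
    ∫⁻ x, ENNReal.ofReal (exp (-g x)) ∂μ =
      ∫⁻ t in Ioi 0, ENNReal.ofReal (exp (-t)) * μ {x | g x ≤ t} := by
  set F : α → ℝ → ℝ≥0∞ := fun x t => {p : α × ℝ | g p.1 ≤ p.2}.indicator
    (fun p => ENNReal.ofReal (exp (-p.2))) (x, t)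
  have hF : Measurable (uncurry F) :=
    (ENNReal.measurable_ofReal.comp (measurable_exp.comp measurable_snd.neg)).indicator
      (measurableSet_le (hg.comp measurable_fst) measurable_snd)
  have hslice : ∀ x, ENNReal.ofReal (exp (-g x)) = ∫⁻ t in Ioi 0, F x t := by
    intro x
    have : (Ici (g x) ∩ Ioi 0 : Set ℝ) =ᵐ[volume] Ioi (g x) := by
      refine ((ae_eq_refl _).inter Ioi_ae_eq_Ici).trans ?_
      rw [Ici_inter_Ici, max_eq_left (hg0 x)]
      exact Ioi_ae_eq_Ici.symm
    rw [← lintegral_exp_neg_Ioi, ← Measure.restrict_congr_set this,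
      ← Measure.restrict_restrict measurableSet_Ici, ← lintegral_indicator measurableSet_Ici]
    rfl
  calc ∫⁻ x, ENNReal.ofReal (exp (-g x)) ∂μ = ∫⁻ x, (∫⁻ t in Ioi 0, F x t) ∂μ := by
        simp_rw [hslice]
    _ = ∫⁻ t in Ioi 0, ∫⁻ x, F x t ∂μ := lintegral_lintegral_swap hF.aemeasurable
    _ = ∫⁻ t in Ioi 0, ENNReal.ofReal (exp (-t)) * μ {x | g x ≤ t} := by
        refine lintegral_congr fun t => ?_
        exact lintegral_indicator_const (hg measurableSet_Iic) (ENNReal.ofReal (exp (-t)))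

theorem lintegral_exp_neg_eq_factorial_mul (μ : Measure α) [SFinite μ] {g : α → ℝ}
    (hg : Measurable g) (hg0 : ∀ x, 0 ≤ g x) {n : ℕ} {V : ℝ≥0∞}
    (hμ : ∀ t > 0, μ {x | g x ≤ t} = ENNReal.ofReal t ^ n * V) :
    ∫⁻ x, ENNReal.ofReal (exp (-g x)) ∂μ = n ! * V := by
  rw [lintegral_exp_neg_eq_lintegral_measure_le μ hg hg0, ← lintegral_exp_neg_mul_pow_Ioi n,
    ← lintegral_mul_const _ (by fun_prop)]
  refine setLIntegral_congr_fun measurableSet_Ioi fun t ht => ?_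
  rw [hμ t ht, mul_assoc]

end

theorem integral_exp_neg_support_polar (n : ℕ)
    (K : Set (EuclideanSpace ℝ (Fin n)))
    (hK : Convex ℝ K) (hKc : IsCompact K) (hKi : (0 : EuclideanSpace ℝ (Fin n)) ∈ interior K) :
    (∫⁻ x, ENNReal.ofReal
        (Real.exp (-(⨆ y : ({u | ∀ z ∈ K, ⟪z, u⟫ ≤ 1} : Set (EuclideanSpace ℝ (Fin n))),
          ⟪x, (y : EuclideanSpace ℝ (Fin n))⟫)))) =
      (n.factorial : ℝ≥0∞) * volume K := by
  obtain ⟨r, hr, hrK⟩ := nhds_basis_closedBall.mem_iff.1 (mem_interior_iff_mem_nhds.1 hKi)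
  have hb : IsBounded (innerPolar K) :=
    isBounded_closedBall.subset (innerPolar_subset_closedBall hr hrK)
  change ∫⁻ x, ENNReal.ofReal (exp (-supportFunction (innerPolar K) x)) = _
  refine lintegral_exp_neg_eq_factorial_mul volume
    (lowerSemicontinuous_supportFunction hb).measurable
    (supportFunction_nonneg hb (zero_mem_innerPolar K)) fun t ht => ?_
  rw [setOf_supportFunction_innerPolar_le hK hKc.isClosed (interior_subset hKi) hb ht,
    Measure.addHaar_smul_of_nonneg volume ht.le, finrank_euclideanSpace_fin,
    ENNReal.ofReal_pow ht.le]
end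

section
/- Let S ⊆ ℝ^n be a simplex with centroid at the origin, λ ∈ (0,1), and let k be an integer with (n+1)(1-λ) - 1 ≤ k ≤ (n+1)(1-λ). Then Vol(conv((1-λ)S ∪ (-λ)S)) = binomial(n, k) · (1-λ)^k · λ^{n-k} · Vol(S). -/
open MeasureTheory Finset
open scoped ENNReal Pointwise

/-!
Write `τ` for the barycentric coordinates with respect to `S` and `N = n + 1`. For `o ∉ I` with
`#I = k` and `c = N (1 - λ) - k ∈ [0, 1]`, the affine functional `∑_{i ∈ I} τ_i + c τ_o` equals
`1 - λ` at the centroid `0`, hence is `≤ 1 - λ²` on both dilates and on their hull. Given `x` in the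
hull, let `I` index its `k` largest coordinates and `o` the next one. Then `x` is a convex
combination of `(1 - λ) v_i` (`i ∈ I`), `0` and `-λ v_j` (`j ∉ I ∪ {o}`); the weight of `0` is
nonnegative precisely by the inequality above. These `N · C(n, k)` simplices lie in the hull, two
of them meet only where two coordinates of a point coincide (a null set), and each is the image of
`S` under an affine map of determinant `(1 - λ)^k (-λ)^(n - k) / N`.
-/

theorem AffineMap.apply_smul_eq {R E : Type*} [CommRing R] [AddCommGroup E] [Module R E]
    (f : E →ᵃ[R] R) (a : R) (x : E) : f (a • x) = a * f x + (1 - a) * f 0 := by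
  rw [f.decomp]
  simp only [Pi.add_apply, map_smul, map_zero, smul_eq_mul]
  ring

theorem exists_upper_finset_and_pivot {ι α : Type*} [Fintype ι] [DecidableEq ι] [LinearOrder α]
    (f : ι → α) {k : ℕ} (hk : k < Fintype.card ι) :
    ∃ o I, #I = k ∧ o ∉ I ∧ (∀ i ∈ I, f o ≤ f i) ∧ ∀ j ∉ I, f j ≤ f o := by
  induction k with
  | zero =>
    obtain ⟨o, -, ho⟩ := univ.exists_max_image f (univ_nonempty_iff.2 (Fintype.card_pos_iff.1 hk))
    exact ⟨o, ∅, card_empty, notMem_empty o, by simp, fun j _ ↦ ho j (mem_univ j)⟩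
  | succ k ih =>
    obtain ⟨o, I, hI, hoI, hup, hdown⟩ := ih (by omega)
    have hne : (insert o I)ᶜ.Nonempty := by
      rw [← card_pos, card_compl, card_insert_of_notMem hoI]
      omega
    obtain ⟨o', ho', hmax⟩ := (insert o I)ᶜ.exists_max_image f hne
    rw [mem_compl, mem_insert, not_or] at ho'
    refine ⟨o', insert o I, by rw [card_insert_of_notMem hoI, hI], by simpa using ho', ?_,
      fun j hj ↦ hmax j (mem_compl.2 hj)⟩
    have ho'o : f o' ≤ f o := hdown o' ho'.2
    intro i hi
    rcases mem_insert.1 hi with rfl | hi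
    · exact ho'o
    · exact ho'o.trans (hup i hi)

theorem eq_of_card_filter_lt_eq {ι α : Type*} [Fintype ι] [LinearOrder α] {f : ι → α}
    (hf : Function.Injective f) {a a' : ι} (h : #{i | f a < f i} = #{i | f a' < f i}) :
    a = a' := by
  by_contra hne
  wlog hlt : f a < f a' generalizing a a'
  · exact this h.symm (Ne.symm hne) ((not_lt.1 hlt).lt_of_ne (hf.ne (Ne.symm hne)))
  have hssub : ({i | f a' < f i} : Finset ι) ⊂ ({i | f a < f i} : Finset ι) := by
    refine ssubset_iff_of_subset (fun i hi ↦ ?_) |>.2 ⟨a', ?_, ?_⟩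
    · simp only [mem_filter_univ] at hi ⊢
      exact hlt.trans hi
    · simpa using hlt
    · simp
  exact (card_lt_card hssub).ne h.symm

namespace AffineBasis

section Algebraic

variable {ι E : Type*} [Fintype ι] [AddCommGroup E] [Module ℝ E] (b : AffineBasis ι ℝ E)

theorem coord_zero_of_sum_eq_zero (hb : ∑ i, b i = 0) (i : ι) :
    b.coord i 0 = (Fintype.card ι : ℝ)⁻¹ := by
  have := b.nonempty
  have hw : ∑ _i : ι, (Fintype.card ι : ℝ)⁻¹ = 1 := by
    simp [card_univ, Fintype.card_ne_zero]
  have h0 : univ.affineCombination ℝ b (fun _ ↦ (Fintype.card ι : ℝ)⁻¹) = 0 := by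
    rw [univ.affineCombination_eq_linear_combination _ _ hw, ← smul_sum, hb, smul_zero]
  rw [← h0, b.coord_apply_combination_of_mem (mem_univ i) hw]

theorem zero_mem_convexHull_of_sum_eq_zero (hb : ∑ i, b i = 0) :
    (0 : E) ∈ convexHull ℝ (Set.range b) := by
  rw [b.convexHull_eq_nonneg_coord]
  intro i
  rw [b.coord_zero_of_sum_eq_zero hb]
  positivity

theorem coord_smul_of_sum_eq_zero (hb : ∑ i, b i = 0) (i : ι) (a : ℝ) (x : E) :
    b.coord i (a • x) = a * b.coord i x + (1 - a) / Fintype.card ι := by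
  rw [AffineMap.apply_smul_eq, b.coord_zero_of_sum_eq_zero hb, div_eq_mul_inv]

theorem coord_smul_apply_of_sum_eq_zero [DecidableEq ι] (hb : ∑ i, b i = 0) (s r : ι) (a : ℝ) :
    b.coord s (a • b r) = a * (if s = r then 1 else 0) + (1 - a) / Fintype.card ι := by
  rw [b.coord_smul_of_sum_eq_zero hb, b.coord_apply]

theorem mem_convexHull_range_smul (hb : ∑ i, b i = 0) {m w : ι → ℝ} (hw0 : ∀ s, 0 ≤ w s)
    (hw1 : ∑ s, w s = 1) {x : E} {c : ℝ} (hwm : ∀ s, w s * m s = b.coord s x - c) :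
    x ∈ convexHull ℝ (Set.range fun r ↦ m r • b r) := by
  classical
  have := b.nonempty
  have hN : (Fintype.card ι : ℝ) ≠ 0 := Nat.cast_ne_zero.2 Fintype.card_ne_zero
  have hwm_sum : ∑ r, w r * m r = 1 - Fintype.card ι * c := by
    simp only [hwm, sum_sub_distrib, b.sum_coord_apply_eq_one, sum_const, card_univ, nsmul_eq_mul]
  suffices h : univ.affineCombination ℝ (fun r ↦ m r • b r) w = x by
    rw [← h]
    exact affineCombination_mem_convexHull (fun s _ ↦ hw0 s) hw1
  refine b.ext_elem fun s ↦ ?_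
  rw [univ.map_affineCombination _ w hw1, univ.affineCombination_eq_linear_combination _ _ hw1]
  simp only [Function.comp_apply, b.coord_smul_apply_of_sum_eq_zero hb, smul_eq_mul, mul_add,
    sum_add_distrib, mul_ite, mul_one, mul_zero, sum_ite_eq, mem_univ, if_true]
  have hrest : ∑ r, w r * ((1 - m r) / Fintype.card ι) = c := by
    simp only [← mul_div_assoc, ← sum_div, mul_sub, mul_one, sum_sub_distrib, hw1, hwm_sum]
    field_simp
    ring
  rw [hrest, hwm]
  ring

theorem sum_sub_eq_neg_card_smul [DecidableEq ι] (hb : ∑ i, b i = 0) (o : ι) :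
    ∑ t : {j // j ≠ o}, (b t - b o) = -(Fintype.card ι : ℝ) • b o := by
  rw [← sum_subtype (univ.erase o) (by simp) (fun r ↦ b r - b o), sum_sub_distrib,
    sum_erase_eq_sub (mem_univ o), hb, sum_const, card_erase_of_mem (mem_univ o), card_univ,
    ← Nat.cast_smul_eq_nsmul ℝ, Nat.cast_sub (Fintype.card_pos_iff.2 ⟨o⟩)]
  module

theorem exists_linearMap_sub_eq_smul [DecidableEq ι] (hb : ∑ i, b i = 0) (m : ι → ℝ) (o : ι) :
    ∃ L : E →ₗ[ℝ] E, (∀ r ≠ o, L (b r - b o) = m r • b r) ∧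
      LinearMap.det L = (∏ r ∈ univ.erase o, m r) / Fintype.card ι := by
  have := b.nonempty
  have hN : (Fintype.card ι : ℝ) ≠ 0 := Nat.cast_ne_zero.2 Fintype.card_ne_zero
  set B := b.basisOf o
  have hB : ∀ t, B t = b t - b o := fun t ↦ b.basisOf_apply o t
  set M : Matrix {j // j ≠ o} {j // j ≠ o} ℝ := Matrix.of
    fun t s ↦ m s * ((if t = s then 1 else 0) - (Fintype.card ι : ℝ)⁻¹)
  -- `b o = -N⁻¹ ∑ t, B t`, so `b r = B r + b o` has coordinates `δ_r - N⁻¹` in the basis `B`.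
  refine ⟨Matrix.toLin B B M, fun r hr ↦ ?_, ?_⟩
  · rw [← hB ⟨r, hr⟩, Matrix.toLin_self]
    have hterm : ∀ t, M t ⟨r, hr⟩ • B t = (if t = ⟨r, hr⟩ then m r • (b t - b o) else 0) -
        (m r * (Fintype.card ι : ℝ)⁻¹) • (b t - b o) := by
      intro t
      simp only [M, Matrix.of_apply, hB, mul_sub, sub_smul, mul_ite, mul_one, mul_zero, ite_smul,
        zero_smul]
    rw [sum_congr rfl fun t _ ↦ hterm t, sum_sub_distrib, sum_ite_eq', if_pos (mem_univ _),
      ← smul_sum, b.sum_sub_eq_neg_card_smul hb o, smul_smul,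
      show m r * (Fintype.card ι : ℝ)⁻¹ * -Fintype.card ι = -m r by field_simp]
    module
  · have hM : M = ((1 : Matrix {j // j ≠ o} {j // j ≠ o} ℝ) +
        Matrix.replicateCol Unit (fun _ ↦ -(Fintype.card ι : ℝ)⁻¹) *
          Matrix.replicateRow Unit (fun _ ↦ (1 : ℝ))) *
        Matrix.diagonal fun s : {j // j ≠ o} ↦ m s := by
      ext t s
      rw [Matrix.mul_diagonal]
      simp only [M, Matrix.of_apply, Matrix.add_apply, Matrix.one_apply, Matrix.mul_apply,
        Matrix.replicateCol_apply, Matrix.replicateRow_apply, univ_unique, sum_singleton]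
      ring
    rw [LinearMap.det_toLin, hM, Matrix.det_mul, Matrix.det_one_add_replicateCol_mul_replicateRow,
      Matrix.det_diagonal, ← prod_subtype (univ.erase o) (by simp) m]
    simp only [dotProduct, one_mul, sum_const, card_univ, Fintype.card_subtype_compl,
      Fintype.card_unique, nsmul_eq_mul, Nat.cast_sub Fintype.card_pos, Nat.cast_one]
    field_simp
    ring

end Algebraic

section Measure

variable {ι E : Type*} [NormedAddCommGroup E] [NormedSpace ℝ E] [MeasurableSpace E]
  [BorelSpace E] [FiniteDimensional ℝ E] (μ : Measure E) [μ.IsAddHaarMeasure]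
  (b : AffineBasis ι ℝ E)

theorem addHaar_setOf_coord_eq_coord {a a' : ι} (h : a ≠ a') :
    μ {x | b.coord a x = b.coord a' x} = 0 := by
  classical
  have hset : {x | b.coord a x = b.coord a' x} =
      AffineSubspace.comap (b.coord a - b.coord a') (AffineSubspace.mk' 0 ⊥) := by
    ext x
    simp [sub_eq_zero]
  rw [hset]
  refine Measure.addHaar_affineSubspace μ _ fun htop ↦ ?_
  have hba : b a ∈ AffineSubspace.comap (b.coord a - b.coord a') (AffineSubspace.mk' 0 ⊥) :=
    htop ▸ AffineSubspace.mem_top ℝ E (b a)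
  simp [b.coord_apply, h.symm] at hba

variable [Fintype ι] [DecidableEq ι]

theorem addHaar_convexHull_range_smul (hb : ∑ i, b i = 0) (m : ι → ℝ) {o : ι} (hmo : m o = 0) :
    μ (convexHull ℝ (Set.range fun r ↦ m r • b r)) =
      ENNReal.ofReal (|∏ r ∈ univ.erase o, m r| / Fintype.card ι) *
        μ (convexHull ℝ (Set.range b)) := by
  obtain ⟨L, hL, hdet⟩ := b.exists_linearMap_sub_eq_smul hb m o
  set f : E →ᵃ[ℝ] E := L.toAffineMap + AffineMap.const ℝ E (-L (b o))
  have hf : ∀ x, f x = -L (b o) + L x := fun x ↦ add_comm _ _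
  have hfb : ∀ r, f (b r) = m r • b r := by
    intro r
    rcases eq_or_ne r o with rfl | hr
    · rw [hf, hmo, zero_smul, neg_add_cancel]
    · rw [hf, ← hL r hr, map_sub, neg_add_eq_sub]
  have himage : convexHull ℝ (Set.range fun r ↦ m r • b r) =
      (fun x ↦ -L (b o) + x) '' (L '' convexHull ℝ (Set.range b)) := by
    rw [Set.image_image, ← funext hf, f.image_convexHull, ← Set.range_comp]
    simp only [Function.comp_def, hfb]
  rw [himage, Set.image_add_left, measure_preimage_add, Measure.addHaar_image_linearMap, hdet,
    abs_div, Nat.abs_cast]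

end Measure

end AffineBasis

section Pieces

variable {ι E : Type*} [Fintype ι] [DecidableEq ι] [AddCommGroup E] [Module ℝ E]

def pieceWeight (l : ℝ) (o : ι) (I : Finset ι) (r : ι) : ℝ :=
  if r ∈ I then 1 - l else if r = o then 0 else -l

def piece (b : AffineBasis ι ℝ E) (l : ℝ) (o : ι) (I : Finset ι) : Set E :=
  convexHull ℝ (Set.range fun r ↦ pieceWeight l o I r • b r)

variable (b : AffineBasis ι ℝ E) {l : ℝ} {o : ι} {I : Finset ι}

theorem piece_subset_convexHull_dilates (hb : ∑ i, b i = 0) :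
    piece b l o I ⊆ convexHull ℝ ((1 - l) • convexHull ℝ (Set.range b) ∪
      (-l) • convexHull ℝ (Set.range b)) := by
  refine convexHull_mono (Set.range_subset_iff.2 fun r ↦ ?_)
  have hbr : b r ∈ convexHull ℝ (Set.range b) := subset_convexHull ℝ _ ⟨r, rfl⟩
  unfold pieceWeight
  split_ifs with hrI hro
  · exact .inl (Set.smul_mem_smul_set hbr)
  · rw [zero_smul, ← smul_zero (1 - l)]
    exact .inl (Set.smul_mem_smul_set (b.zero_mem_convexHull_of_sum_eq_zero hb))
  · exact .inr (Set.smul_mem_smul_set hbr)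

theorem convexHull_dilates_subset_setOf_sum_coord_le (hb : ∑ i, b i = 0) (hl0 : 0 ≤ l) (hl1 : l ≤ 1)
    (hoI : o ∉ I) (hc0 : 0 ≤ Fintype.card ι * (1 - l) - #I)
    (hc1 : Fintype.card ι * (1 - l) - #I ≤ 1) :
    convexHull ℝ ((1 - l) • convexHull ℝ (Set.range b) ∪ (-l) • convexHull ℝ (Set.range b)) ⊆
      {x | ∑ i ∈ I, b.coord i x + (Fintype.card ι * (1 - l) - #I) * b.coord o x ≤
        (1 - l) * (1 + l)} := by
  have := b.nonempty
  set c : ℝ := Fintype.card ι * (1 - l) - #I with hc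
  set φ : E → ℝ := fun x ↦ ∑ i ∈ I, b.coord i x + c * b.coord o x
  have hφ_smul : ∀ a y, φ (a • y) = a * φ y + (1 - a) * (1 - l) := by
    intro a y
    simp only [φ, b.coord_smul_of_sum_eq_zero hb, sum_add_distrib, ← mul_sum, sum_const,
      nsmul_eq_mul, hc]
    field_simp
    ring
  refine convexHull_min ?_ ?_
  · rintro _ (⟨y, hy, rfl⟩ | ⟨y, hy, rfl⟩) <;>
      rw [b.convexHull_eq_nonneg_coord] at hy <;>
      change φ _ ≤ _ <;> rw [hφ_smul]
    · have hφ_le : φ y ≤ 1 := by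
        calc φ y ≤ ∑ i ∈ insert o I, b.coord i y := by
              rw [sum_insert hoI]
              nlinarith [hy o]
          _ ≤ ∑ i, b.coord i y := sum_le_sum_of_subset_of_nonneg (subset_univ _) fun i _ _ ↦ hy i
          _ = 1 := b.sum_coord_apply_eq_one y
      nlinarith
    · have hφ_nonneg : 0 ≤ φ y :=
        add_nonneg (sum_nonneg fun i _ ↦ hy i) (mul_nonneg hc0 (hy o))
      nlinarith
  · intro x hx y hy s t hs ht hst
    simp only [Set.mem_ofPred_eq, Convex.combo_affine_apply hst, smul_eq_mul, sum_add_distrib,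
      ← mul_sum] at hx hy ⊢
    obtain rfl : t = 1 - s := by linarith
    nlinarith [mul_le_mul_of_nonneg_left hx hs, mul_le_mul_of_nonneg_left hy ht]

theorem mem_piece_of_coord (hb : ∑ i, b i = 0) (hl0 : 0 < l) (hl1 : l < 1) (hoI : o ∉ I) {x : E}
    (hup : ∀ i ∈ I, b.coord o x ≤ b.coord i x) (hdown : ∀ j ∉ I, b.coord j x ≤ b.coord o x)
    (hcut : ∑ i ∈ I, b.coord i x + (Fintype.card ι * (1 - l) - #I) * b.coord o x ≤
      (1 - l) * (1 + l)) :
    x ∈ piece b l o I := by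
  have h1l : 0 < 1 - l := sub_pos.2 hl1
  set T := b.coord o x
  set g : ι → ℝ := fun s ↦
    if s ∈ I then (b.coord s x - T) / (1 - l) else (T - b.coord s x) / l
  have hg_sum : 1 - ∑ s, g s = ((1 - l) * (1 + l) -
      (∑ i ∈ I, b.coord i x + (Fintype.card ι * (1 - l) - #I) * T)) / (l * (1 - l)) := by
    have hcompl : ∑ s ∈ Iᶜ, b.coord s x = 1 - ∑ i ∈ I, b.coord i x := by
      rw [eq_sub_iff_add_eq', sum_add_sum_compl, b.sum_coord_apply_eq_one]
    rw [← sum_add_sum_compl I g, sum_congr rfl fun s hs ↦ if_pos hs,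
      sum_congr rfl fun s hs ↦ if_neg (mem_compl.1 hs), ← sum_div, ← sum_div, sum_sub_distrib,
      sum_sub_distrib, hcompl, sum_const, sum_const, card_compl, nsmul_eq_mul, nsmul_eq_mul,
      Nat.cast_sub (card_le_univ I)]
    field_simp
    ring
  -- `g s` is the weight of the vertex indexed by `s ≠ o`; the centroid gets what is left.
  refine b.mem_convexHull_range_smul hb (w := Function.update g o (1 - ∑ s, g s)) (c := T)
    (fun s ↦ ?_) ?_ (fun s ↦ ?_)
  · rcases eq_or_ne s o with rfl | hso
    · rw [Function.update_self, hg_sum]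
      exact div_nonneg (by linarith) (by positivity)
    · rw [Function.update_of_ne hso]
      by_cases hsI : s ∈ I
      · simpa only [g, hsI, if_true] using div_nonneg (sub_nonneg.2 (hup s hsI)) h1l.le
      · simpa only [g, hsI, if_false] using div_nonneg (sub_nonneg.2 (hdown s hsI)) hl0.le
  · have hgo : g o = 0 := by simp [g, hoI, T]
    rw [sum_update_of_mem (mem_univ o), sum_eq_add_sum_sdiff_singleton_of_mem (mem_univ o) g, hgo]
    ring
  · rcases eq_or_ne s o with rfl | hso
    · simp [pieceWeight, hoI, T]
    · rw [Function.update_of_ne hso]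
      by_cases hsI : s ∈ I
      · simp only [g, pieceWeight, hsI, if_true]
        field_simp
      · simp only [g, pieceWeight, hsI, hso, if_false]
        field_simp
        ring

variable (ι) in
def pieceIndex (k : ℕ) : Finset (ι × Finset ι) := {p | #p.2 = k ∧ p.1 ∉ p.2}

theorem mem_pieceIndex {k : ℕ} {p : ι × Finset ι} :
    p ∈ pieceIndex ι k ↔ #p.2 = k ∧ p.1 ∉ p.2 :=
  mem_filter_univ p

theorem card_pieceIndex (k : ℕ) :
    #(pieceIndex ι k) = Fintype.card ι * (Fintype.card ι - 1).choose k := by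
  have hfiber : ∀ o : ι, #({I | #I = k ∧ o ∉ I} : Finset (Finset ι)) =
      (Fintype.card ι - 1).choose k := by
    intro o
    rw [← card_univ, ← card_erase_of_mem (mem_univ o), ← card_powersetCard]
    congr 1
    ext I
    simp [mem_powersetCard, subset_erase, and_comm]
  rw [pieceIndex, card_filter, Fintype.sum_prod_type]
  simp only [← card_filter, hfiber, sum_const, card_univ, smul_eq_mul]

theorem convexHull_dilates_eq_biUnion_piece (hb : ∑ i, b i = 0) (hl0 : 0 < l) (hl1 : l < 1)
    {k : ℕ} (hk1 : Fintype.card ι * (1 - l) - 1 ≤ k) (hk2 : k ≤ Fintype.card ι * (1 - l)) :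
    convexHull ℝ ((1 - l) • convexHull ℝ (Set.range b) ∪ (-l) • convexHull ℝ (Set.range b)) =
      ⋃ p ∈ pieceIndex ι k, piece b l p.1 p.2 := by
  refine (Set.iUnion₂_subset fun p _ ↦ piece_subset_convexHull_dilates b hb).antisymm' ?_
  intro x hx
  have hk : k < Fintype.card ι := by
    have := b.nonempty
    have hN : (0 : ℝ) < Fintype.card ι := by exact_mod_cast Fintype.card_pos
    have : (k : ℝ) < Fintype.card ι := by nlinarith
    exact_mod_cast this
  obtain ⟨o, I, rfl, hoI, hup, hdown⟩ := exists_upper_finset_and_pivot (b.coord · x) hk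
  refine Set.mem_biUnion (x := (o, I)) (mem_pieceIndex.2 ⟨rfl, hoI⟩) ?_
  refine mem_piece_of_coord b hb hl0 hl1 hoI hup hdown ?_
  exact convexHull_dilates_subset_setOf_sum_coord_le b hb hl0.le hl1.le hoI (by linarith)
    (by linarith) hx

theorem piece_subset_setOf_coord_le (hb : ∑ i, b i = 0) (hl0 : 0 ≤ l) (hl1 : l ≤ 1) {a j : ι}
    (ha : a ∈ insert o I) (hj : j ∉ I) :
    piece b l o I ⊆ {x | b.coord j x ≤ b.coord a x} := by
  refine convexHull_min (Set.range_subset_iff.2 fun r ↦ ?_) ?_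
  · simp only [Set.mem_ofPred_eq, b.coord_smul_apply_of_sum_eq_zero hb, add_le_add_iff_right]
    unfold pieceWeight
    by_cases hrI : r ∈ I
    · have hjr : j ≠ r := fun h ↦ hj (h ▸ hrI)
      simp only [hrI, if_true, hjr, if_false]
      split_ifs <;> linarith
    · by_cases hro : r = o
      · subst hro
        simp [hrI]
      have har : a ≠ r := by
        rintro rfl
        rcases mem_insert.1 ha with rfl | haI
        exacts [hro rfl, hrI haI]
      simp only [hrI, hro, har, if_false]
      split_ifs <;> linarith
  · intro x hx y hy s t hs ht hst
    simp only [Set.mem_ofPred_eq, Convex.combo_affine_apply hst, smul_eq_mul] at hx hy ⊢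
    nlinarith [mul_le_mul_of_nonneg_left hx hs, mul_le_mul_of_nonneg_left hy ht]

theorem eq_filter_of_mem_piece (hb : ∑ i, b i = 0) (hl0 : 0 ≤ l) (hl1 : l ≤ 1) (hoI : o ∉ I)
    {x : E} (hx : x ∈ piece b l o I) (hinj : Function.Injective fun i ↦ b.coord i x) :
    I = ({i | b.coord o x < b.coord i x} : Finset ι) := by
  ext i
  rw [mem_filter_univ]
  constructor
  · intro hi
    refine lt_of_le_of_ne (piece_subset_setOf_coord_le b hb hl0 hl1 (mem_insert_of_mem hi) hoI hx)
      fun h ↦ hoI ?_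
    rwa [hinj h]
  · intro hlt
    by_contra hi
    exact (piece_subset_setOf_coord_le b hb hl0 hl1 (mem_insert_self o I) hi hx).not_gt hlt

end Pieces

section Volume

variable {ι E : Type*} [Fintype ι] [DecidableEq ι] [NormedAddCommGroup E] [NormedSpace ℝ E]
  [MeasurableSpace E] [BorelSpace E] [FiniteDimensional ℝ E] (μ : Measure E) [μ.IsAddHaarMeasure]
  (b : AffineBasis ι ℝ E) {l : ℝ}

theorem prod_erase_pieceWeight {o : ι} {I : Finset ι} (hoI : o ∉ I) :
    ∏ r ∈ univ.erase o, pieceWeight l o I r = (1 - l) ^ #I * (-l) ^ (Fintype.card ι - 1 - #I) := by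
  have hI : I ⊆ univ.erase o := subset_erase.2 ⟨subset_univ I, hoI⟩
  have hcard := card_filter_add_card_filter_not (s := univ.erase o) (· ∈ I)
  rw [filter_mem_eq_inter, inter_eq_right.2 hI, card_erase_of_mem (mem_univ o), card_univ] at hcard
  rw [prod_congr rfl fun r hr ↦ show pieceWeight l o I r = if r ∈ I then 1 - l else -l by
      simp [pieceWeight, (mem_erase.1 hr).1],
    prod_ite, prod_const, prod_const, filter_mem_eq_inter, inter_eq_right.2 hI]
  congr 2
  omega

theorem addHaar_piece (hb : ∑ i, b i = 0) (hl0 : 0 ≤ l) (hl1 : l ≤ 1) {o : ι} {I : Finset ι}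
    (hoI : o ∉ I) :
    μ (piece b l o I) = ENNReal.ofReal ((1 - l) ^ #I * l ^ (Fintype.card ι - 1 - #I) /
      Fintype.card ι) * μ (convexHull ℝ (Set.range b)) := by
  rw [piece, b.addHaar_convexHull_range_smul μ hb _ (o := o) (by simp [pieceWeight, hoI]),
    prod_erase_pieceWeight hoI, abs_mul, abs_pow, abs_pow, abs_neg, abs_of_nonneg hl0,
    abs_of_nonneg (sub_nonneg.2 hl1)]

theorem aedisjoint_piece (hb : ∑ i, b i = 0) (hl0 : 0 ≤ l) (hl1 : l ≤ 1) {o o' : ι}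
    {I I' : Finset ι} (hoI : o ∉ I) (ho'I' : o' ∉ I') (hcard : #I = #I') (hne : (o, I) ≠ (o', I')) :
    AEDisjoint μ (piece b l o I) (piece b l o' I') := by
  refine measure_mono_null (t := ⋃ a, ⋃ a', ⋃ (_ : a ≠ a'), {x | b.coord a x = b.coord a' x})
    (fun x ⟨hx, hx'⟩ ↦ ?_) (measure_iUnion_null fun a ↦ measure_iUnion_null fun a' ↦
      measure_iUnion_null fun h ↦ b.addHaar_setOf_coord_eq_coord μ h)
  by_contra hties
  have hinj : Function.Injective fun i ↦ b.coord i x := fun a a' h ↦ by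
    by_contra hne
    exact hties (Set.mem_iUnion₂.2 ⟨a, a', Set.mem_iUnion.2 ⟨hne, h⟩⟩)
  have hI := eq_filter_of_mem_piece b hb hl0 hl1 hoI hx hinj
  have hI' := eq_filter_of_mem_piece b hb hl0 hl1 ho'I' hx' hinj
  obtain rfl : o = o' := eq_of_card_filter_lt_eq hinj (by rw [← hI, ← hI', hcard])
  exact hne (by rw [hI, hI'])

theorem addHaar_convexHull_dilates (hb : ∑ i, b i = 0) (hl0 : 0 < l) (hl1 : l < 1) {k : ℕ}
    (hk1 : Fintype.card ι * (1 - l) - 1 ≤ k) (hk2 : k ≤ Fintype.card ι * (1 - l)) :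
    μ (convexHull ℝ ((1 - l) • convexHull ℝ (Set.range b) ∪ (-l) • convexHull ℝ (Set.range b))) =
      ENNReal.ofReal ((Fintype.card ι - 1).choose k * (1 - l) ^ k * l ^ (Fintype.card ι - 1 - k)) *
        μ (convexHull ℝ (Set.range b)) := by
  have := b.nonempty
  rw [convexHull_dilates_eq_biUnion_piece b hb hl0 hl1 hk1 hk2,
    measure_biUnion_finset₀ ?disj ?meas]
  case disj =>
    intro p hp p' hp' hne
    rw [mem_coe, mem_pieceIndex] at hp hp'
    exact aedisjoint_piece μ b hb hl0.le hl1.le hp.2 hp'.2 (hp.1.trans hp'.1.symm) hne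
  case meas =>
    exact fun p _ ↦ ((Set.finite_range _).isClosed_convexHull ℝ).measurableSet.nullMeasurableSet
  have hpiece : ∀ p ∈ pieceIndex ι k, μ (piece b l p.1 p.2) = ENNReal.ofReal
      ((1 - l) ^ k * l ^ (Fintype.card ι - 1 - k) / Fintype.card ι) *
        μ (convexHull ℝ (Set.range b)) := by
    intro p hp
    obtain ⟨hcard, hoI⟩ := mem_pieceIndex.1 hp
    rw [addHaar_piece μ b hb hl0.le hl1.le hoI, hcard]
  rw [sum_congr rfl hpiece, sum_const, card_pieceIndex, nsmul_eq_mul, ← mul_assoc,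
    ← ENNReal.ofReal_natCast, ← ENNReal.ofReal_mul (by positivity)]
  congr 2
  have : (Fintype.card ι : ℝ) ≠ 0 := Nat.cast_ne_zero.2 Fintype.card_ne_zero
  push_cast
  field_simp

end Volume

theorem volume_convexHull_simplex_dilates (n : ℕ)
    (v : Fin (n + 1) → EuclideanSpace ℝ (Fin n)) (hv : AffineIndependent ℝ v)
    (S : Set (EuclideanSpace ℝ (Fin n))) (hS : S = convexHull ℝ (Set.range v))
    (hcent : ∑ i, v i = 0)
    (l : ℝ) (hl : l ∈ Set.Ioo (0:ℝ) 1)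
    (k : ℕ) (hk1 : (n + 1 : ℝ) * (1 - l) - 1 ≤ k) (hk2 : (k : ℝ) ≤ (n + 1 : ℝ) * (1 - l)) :
    volume (convexHull ℝ ((1 - l) • S ∪ (-l) • S)) =
      ENNReal.ofReal ((n.choose k : ℝ) * (1 - l) ^ k * l ^ (n - k)) * volume S := by
  have hspan : affineSpan ℝ (Set.range v) = ⊤ := by
    rw [hv.affineSpan_eq_top_iff_card_eq_finrank_add_one]
    simp [finrank_euclideanSpace]
  subst hS
  have h := addHaar_convexHull_dilates volume ⟨v, hv, hspan⟩ hcent hl.1 hl.2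
    (k := k) (by simpa using hk1) (by simpa using hk2)
  simp only [Fintype.card_fin, add_tsub_cancel_right] at h
  exact h
end

section
/- If S is a simplex in ℝ^n with a vertex at the origin, then for every λ ∈ [0,1], Vol(conv((1-λ)S ∪ (-λ)S)) = Vol(S). -/
/-!
In the coordinates of the basis `v`, the simplex is `S = {y | 0 ≤ yᵢ, ∑ yᵢ ≤ 1}`. For `0 < l < 1`
the hull `T` of `(1 - l) • S ∪ (-l) • S` is the union, over `I ⊆ {1, …, n}`, of the images of `S`
under the diagonal maps that multiply the `i`-th coordinate by `-l` for `i ∈ I` and by `1 - l`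
otherwise: the piece indexed by `I` is the part of `T` in the orthant whose negative coordinates
are those in `I`. Distinct pieces meet only inside coordinate hyperplanes, and the piece indexed by
`I` has volume `l ^ |I| (1 - l) ^ (n - |I|) Vol S`; these add up to `(l + (1 - l)) ^ n Vol S`.
At `l = 0` and `l = 1` the hull is `S` and `-S`.
-/

open MeasureTheory
open scoped ENNReal Pointwise

variable {ι E 𝕜 : Type*}

theorem convexHull_smul_union_zero_smul [CommSemiring 𝕜] [PartialOrder 𝕜] [AddCommMonoid E]
    [Module 𝕜 E] {s : Set E} (hs : Convex 𝕜 s) (h0 : 0 ∈ s) (c : 𝕜) :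
    convexHull 𝕜 (c • s ∪ (0 : 𝕜) • s) = c • s := by
  rw [Set.zero_smul_set ⟨0, h0⟩, Set.union_eq_left.2 (Set.zero_subset.2 (Set.zero_mem_smul_set h0)),
    (hs.smul c).convexHull_eq]

section Simplex

variable [Semiring 𝕜] [PartialOrder 𝕜] [AddCommMonoid E] [Module 𝕜 E]

def basisSimplex (b : Module.Basis ι 𝕜 E) : Set E :=
  convexHull 𝕜 (insert 0 (Set.range b))

theorem zero_mem_basisSimplex (b : Module.Basis ι 𝕜 E) : 0 ∈ basisSimplex b :=
  subset_convexHull 𝕜 _ (Set.mem_insert _ _)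

theorem basis_mem_basisSimplex (b : Module.Basis ι 𝕜 E) (i : ι) : b i ∈ basisSimplex b :=
  subset_convexHull 𝕜 _ (Set.mem_insert_of_mem _ ⟨i, rfl⟩)

end Simplex

section OrthantScaling

variable [CommRing 𝕜] [AddCommGroup E] [Module 𝕜 E] [Fintype ι] [DecidableEq ι]

def orthantCoeff (l : 𝕜) (I : Finset ι) (i : ι) : 𝕜 :=
  if i ∈ I then -l else 1 - l

noncomputable def orthantScaling (b : Module.Basis ι 𝕜 E) (l : 𝕜) (I : Finset ι) : E →ₗ[𝕜] E :=
  Matrix.toLin b b (Matrix.diagonal (orthantCoeff l I))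

variable (b : Module.Basis ι 𝕜 E) (l : 𝕜) (I : Finset ι)

theorem repr_orthantScaling (x : E) (i : ι) :
    b.repr (orthantScaling b l I x) i = orthantCoeff l I i * b.repr x i := by
  simp [orthantScaling, Matrix.repr_toLin, Matrix.mulVec_diagonal]

theorem orthantScaling_basis (i : ι) : orthantScaling b l I (b i) = orthantCoeff l I i • b i := by
  simp [orthantScaling, Matrix.toLin_self, Matrix.diagonal_apply]

theorem image_orthantScaling_basisSimplex_subset [PartialOrder 𝕜] :
    orthantScaling b l I '' basisSimplex b ⊆
      convexHull 𝕜 ((1 - l) • basisSimplex b ∪ (-l) • basisSimplex b) := by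
  refine (LinearMap.image_convexHull _ _).trans_subset (convexHull_mono ?_)
  rintro _ ⟨_, rfl | ⟨i, rfl⟩, rfl⟩
  · exact Or.inl ⟨0, zero_mem_basisSimplex b, by simp⟩
  · rw [orthantScaling_basis, orthantCoeff]
    split_ifs
    · exact Or.inr (Set.smul_mem_smul_set (basis_mem_basisSimplex b i))
    · exact Or.inl (Set.smul_mem_smul_set (basis_mem_basisSimplex b i))

end OrthantScaling

section Decomposition

variable [Field 𝕜] [LinearOrder 𝕜] [IsStrictOrderedRing 𝕜] [AddCommGroup E] [Module 𝕜 E]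
  [Fintype ι]

theorem basisSimplex_eq_setOf_repr (b : Module.Basis ι 𝕜 E) :
    basisSimplex b = {x | (∀ i, 0 ≤ b.repr x i) ∧ ∑ i, b.repr x i ≤ 1} := by
  refine (convexHull_min ?_ ?_).antisymm fun x ⟨hx₀, hx₁⟩ ↦ ?_
  · rintro _ (rfl | ⟨i, rfl⟩)
    · simp
    · classical
      simp [Finsupp.single_apply, apply_ite]
  · rintro x ⟨hx₀, hx₁⟩ y ⟨hy₀, hy₁⟩ a c ha hc hac
    simp only [Set.mem_ofPred_eq, map_add, map_smul, Finsupp.add_apply, Finsupp.smul_apply,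
      smul_eq_mul, Finset.sum_add_distrib, ← Finset.mul_sum]
    refine ⟨fun i ↦ add_nonneg (mul_nonneg ha (hx₀ i)) (mul_nonneg hc (hy₀ i)), ?_⟩
    nlinarith [mul_le_mul_of_nonneg_left hx₁ ha, mul_le_mul_of_nonneg_left hy₁ hc]
  · have hx : x = ∑ o : Option ι, o.elim (1 - ∑ i, b.repr x i) (b.repr x) • o.elim 0 b := by
      simp [Fintype.sum_option, b.sum_repr]
    rw [hx]
    refine (convex_convexHull 𝕜 _).sum_mem (fun o _ ↦ ?_) ?_ fun o _ ↦ ?_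
    · cases o <;> simp [hx₀, hx₁]
    · simp [Fintype.sum_option]
    · exact subset_convexHull 𝕜 _ (by cases o <;> simp)

theorem div_ite_neg_mem_Icc {l u t x : 𝕜} (hl₀ : 0 < l) (hl₁ : l < 1) (hu : 0 ≤ u) (ht : 0 ≤ t)
    (hx : x = (1 - l) * u - l * t) :
    x / (if x < 0 then -l else 1 - l) ∈ Set.Icc 0 (u + t) := by
  split_ifs with hneg
  · rw [Set.mem_Icc, div_le_iff_of_neg (neg_lt_zero.2 hl₀)]
    exact ⟨div_nonneg_of_nonpos hneg.le (neg_nonpos.2 hl₀.le), by nlinarith⟩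
  · rw [Set.mem_Icc, div_le_iff₀ (sub_pos.2 hl₁)]
    exact ⟨div_nonneg (not_lt.1 hneg) (sub_pos.2 hl₁).le, by nlinarith⟩

variable [DecidableEq ι] (b : Module.Basis ι 𝕜 E)

theorem convexHull_smul_union_neg_smul_basisSimplex {l : 𝕜} (hl₀ : 0 < l) (hl₁ : l < 1) :
    convexHull 𝕜 ((1 - l) • basisSimplex b ∪ (-l) • basisSimplex b) =
      ⋃ I, orthantScaling b l I '' basisSimplex b := by
  refine subset_antisymm ?_
    (Set.iUnion_subset fun I ↦ image_orthantScaling_basisSimplex_subset b l I)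
  have hS : Convex 𝕜 (basisSimplex b) := convex_convexHull 𝕜 _
  have hne : (basisSimplex b).Nonempty := ⟨0, zero_mem_basisSimplex b⟩
  intro x hx
  rw [(hS.smul _).convexHull_union (hS.smul _) hne.smul_set hne.smul_set, mem_convexJoin] at hx
  obtain ⟨_, ⟨y, hy, rfl⟩, _, ⟨z, hz, rfl⟩, α, β, hα, hβ, hαβ, rfl⟩ := hx
  rw [basisSimplex_eq_setOf_repr] at hy hz
  set x := α • (1 - l) • y + β • (-l) • z
  set I := Finset.univ.filter fun i ↦ b.repr x i < 0
  obtain ⟨w, hw_repr⟩ : ∃ w, ∀ i, b.repr w i = b.repr x i / orthantCoeff l I i :=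
    ⟨_, fun i ↦ congrFun (b.repr_sum_self _) i⟩
  have hx : ∀ i, b.repr x i = (1 - l) * (α * b.repr y i) - l * (β * b.repr z i) := fun i ↦ by
    simp only [x, map_add, map_smul, Finsupp.add_apply, Finsupp.smul_apply, smul_eq_mul]
    ring
  have hw : ∀ i, b.repr w i ∈ Set.Icc 0 (α * b.repr y i + β * b.repr z i) := fun i ↦ by
    simpa [hw_repr, I, orthantCoeff] using
      div_ite_neg_mem_Icc hl₀ hl₁ (mul_nonneg hα (hy.1 i)) (mul_nonneg hβ (hz.1 i)) (hx i)
  refine Set.mem_iUnion.2 ⟨I, w, ?_, b.ext_elem fun i ↦ ?_⟩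
  · refine (basisSimplex_eq_setOf_repr b).symm ▸ ⟨fun i ↦ (hw i).1, ?_⟩
    calc ∑ i, b.repr w i ≤ ∑ i, (α * b.repr y i + β * b.repr z i) :=
          Finset.sum_le_sum fun i _ ↦ (hw i).2
      _ = α * ∑ i, b.repr y i + β * ∑ i, b.repr z i := by
          rw [Finset.sum_add_distrib, Finset.mul_sum, Finset.mul_sum]
      _ ≤ α + β := add_le_add (mul_le_of_le_one_right hα hy.2) (mul_le_of_le_one_right hβ hz.2)
      _ = 1 := hαβ
  · have hc : orthantCoeff l I i ≠ 0 := by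
      unfold orthantCoeff
      split_ifs
      exacts [neg_ne_zero.2 hl₀.ne', (sub_pos.2 hl₁).ne']
    rw [repr_orthantScaling, hw_repr, mul_div_cancel₀ _ hc]

theorem abs_det_orthantScaling {l : 𝕜} (hl : l ∈ Set.Icc 0 1) (I : Finset ι) :
    |LinearMap.det (orthantScaling b l I)| = ∏ i, if i ∈ I then l else 1 - l := by
  rw [orthantScaling, LinearMap.det_toLin, Matrix.det_diagonal, Finset.abs_prod]
  refine Finset.prod_congr rfl fun i _ ↦ ?_
  unfold orthantCoeff
  split_ifs
  exacts [(abs_neg l).trans (abs_of_nonneg hl.1), abs_of_nonneg (sub_nonneg.2 hl.2)]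

end Decomposition

theorem Finset.sum_prod_ite_mem {R : Type*} [CommSemiring R] [Fintype ι] [DecidableEq ι] (a c : R) :
    ∑ I : Finset ι, ∏ i, (if i ∈ I then a else c) = (a + c) ^ Fintype.card ι := by
  rw [← Finset.card_univ, ← Finset.prod_const, Fintype.prod_add]
  simp [Finset.prod_ite, Finset.filter_not, Finset.compl_eq_univ_sdiff]

section Measure

variable [NormedAddCommGroup E] [NormedSpace ℝ E] [FiniteDimensional ℝ E] [MeasurableSpace E]
  [BorelSpace E] (μ : Measure E) [μ.IsAddHaarMeasure] (b : Module.Basis ι ℝ E)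

theorem addHaar_setOf_repr_eq_zero (i : ι) : μ {x | b.repr x i = 0} = 0 :=
  Measure.addHaar_submodule μ (LinearMap.ker (b.coord i)) fun h ↦ by
    simpa using (LinearMap.ker_eq_top.1 h ▸ b.coord_apply i (b i) :)

variable [Fintype ι] [DecidableEq ι]

theorem aedisjoint_image_orthantScaling {l : ℝ} (hl : l ∈ Set.Icc 0 1) {s : Set E}
    (hs : ∀ x ∈ s, ∀ i, 0 ≤ b.repr x i) {I J : Finset ι} (hIJ : I ≠ J) :
    AEDisjoint μ (orthantScaling b l I '' s) (orthantScaling b l J '' s) := by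
  have hsub : ∀ {I J : Finset ι} {i}, i ∈ I → i ∉ J →
      orthantScaling b l I '' s ∩ orthantScaling b l J '' s ⊆ {x | b.repr x i = 0} := by
    rintro I J i hI hJ _ ⟨⟨y, hy, rfl⟩, z, hz, hzy⟩
    have hle : b.repr (orthantScaling b l I y) i ≤ 0 := by
      rw [repr_orthantScaling, orthantCoeff, if_pos hI, neg_mul]
      exact neg_nonpos.2 (mul_nonneg hl.1 (hs y hy i))
    have hge : 0 ≤ b.repr (orthantScaling b l J z) i := by
      rw [repr_orthantScaling, orthantCoeff, if_neg hJ]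
      exact mul_nonneg (sub_nonneg.2 hl.2) (hs z hz i)
    exact le_antisymm hle (hzy ▸ hge)
  obtain ⟨i, hi⟩ := not_forall.1 (mt Finset.ext hIJ)
  by_cases hiI : i ∈ I
  · exact measure_mono_null (hsub hiI (hi ∘ iff_of_true hiI)) (addHaar_setOf_repr_eq_zero μ b i)
  · refine measure_mono_null (Set.inter_comm _ _).subset ?_
    exact measure_mono_null (hsub (by tauto) hiI) (addHaar_setOf_repr_eq_zero μ b i)

theorem addHaar_image_orthantScaling {l : ℝ} (hl : l ∈ Set.Icc 0 1) (I : Finset ι) (s : Set E) :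
    μ (orthantScaling b l I '' s) = ENNReal.ofReal (∏ i, if i ∈ I then l else 1 - l) * μ s := by
  rw [Measure.addHaar_image_linearMap, abs_det_orthantScaling b hl]

theorem addHaar_convexHull_smul_union_neg_smul_basisSimplex {l : ℝ} (hl : l ∈ Set.Icc 0 1) :
    μ (convexHull ℝ ((1 - l) • basisSimplex b ∪ (-l) • basisSimplex b)) = μ (basisSimplex b) := by
  have hS : Convex ℝ (basisSimplex b) := convex_convexHull ℝ _
  rcases hl.1.eq_or_lt with rfl | hl₀
  · rw [sub_zero, neg_zero, convexHull_smul_union_zero_smul hS (zero_mem_basisSimplex b), one_smul]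
  rcases hl.2.eq_or_lt with rfl | hl₁
  · rw [sub_self, Set.union_comm, convexHull_smul_union_zero_smul hS (zero_mem_basisSimplex b),
      Measure.addHaar_smul]
    simp
  have hcompact : IsCompact (basisSimplex b) :=
    ((Set.finite_range b).insert 0).isCompact_convexHull ℝ
  have hmeas : ∀ I, NullMeasurableSet (orthantScaling b l I '' basisSimplex b) μ := fun I ↦
    (hcompact.image (orthantScaling b l I).continuous_of_finiteDimensional).isClosed
      |>.measurableSet.nullMeasurableSet
  have hdisj :
      Pairwise (Function.onFun (AEDisjoint μ) fun I ↦ orthantScaling b l I '' basisSimplex b) :=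
    fun I J ↦ aedisjoint_image_orthantScaling μ b hl
      (fun x hx ↦ ((basisSimplex_eq_setOf_repr b).le hx).1)
  rw [convexHull_smul_union_neg_smul_basisSimplex b hl₀ hl₁, measure_iUnion₀ hdisj hmeas,
    tsum_fintype]
  simp_rw [addHaar_image_orthantScaling μ b hl]
  rw [← Finset.sum_mul, ← ENNReal.ofReal_sum_of_nonneg, Finset.sum_prod_ite_mem, add_sub_cancel,
    one_pow, ENNReal.ofReal_one, one_mul]
  exact fun I _ ↦ Finset.prod_nonneg fun i _ ↦ by split_ifs <;> linarith [hl.2]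

end Measure

theorem volume_convexHull_simplex_vertex_origin (n : ℕ)
    (v : Fin n → EuclideanSpace ℝ (Fin n)) (hv : LinearIndependent ℝ v)
    (S : Set (EuclideanSpace ℝ (Fin n)))
    (hS : S = convexHull ℝ (insert (0 : EuclideanSpace ℝ (Fin n)) (Set.range v)))
    (l : ℝ) (hl : l ∈ Set.Icc (0:ℝ) 1) :
    volume (convexHull ℝ ((1 - l) • S ∪ (-l) • S)) = volume S := by
  let b := basisOfLinearIndependentOfCardEqFinrank' (K := ℝ) v hv (by simp)
  obtain rfl : S = basisSimplex b := by
    rw [hS, basisSimplex, coe_basisOfLinearIndependentOfCardEqFinrank']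
  exact addHaar_convexHull_smul_union_neg_smul_basisSimplex volume b hl
end
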